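/- arXiv:2605.01933 — 6 statements merged into one kernel-verified Lean document; each statement's English description precedes it below -/
import Mathlib

section
/- Let γ be the standard Gaussian measure on ℝ^d (density (2π)^{-d/2} e^{-‖v‖²/2} with respect to Lebesgue measure). Let h : ℝ^d → [0,∞) be measurable with ∫ h dγ = 1 and finite relative entropy Ent_γ(h) := ∫ h log h dγ < ∞ (with the convention 0·log 0 = 0). Then the first moment is finite, ∫ ‖v‖ h(v) dγ(v) < ∞, and the mean m := ∫ v h(v) dγ(v) satisfies ‖m‖² ≤ 2 Ent_γ(h). -/
open MeasureTheory Real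
open scoped RealInnerProductSpace NNReal ENNReal

/-- The standard Gaussian probability measure on `ℝ^d`, given by the density
`(2π)^(-d/2) exp(-‖v‖²/2)` with respect to Lebesgue measure. -/
noncomputable def stdGaussian (d : ℕ) : Measure (EuclideanSpace ℝ (Fin d)) :=
  (volume : Measure (EuclideanSpace ℝ (Fin d))).withDensity
    (fun v => ENNReal.ofReal ((2 * π) ^ (-(d : ℝ) / 2) * Real.exp (-‖v‖ ^ 2 / 2)))


variable {d : ℕ}

lemma young (a b : ℝ) (hb : 0 ≤ b) : a * b ≤ b * Real.log b - b + Real.exp a := by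
  rcases eq_or_lt_of_le hb with rfl | hb'
  · simpa using (Real.exp_pos a).le
  · have h1 : (a - Real.log b) + 1 ≤ Real.exp (a - Real.log b) := Real.add_one_le_exp _
    have h2 : Real.exp (a - Real.log b) = Real.exp a / b := by
      rw [Real.exp_sub, Real.exp_log hb']
    have h3 := mul_le_mul_of_nonneg_right h1 hb'.le
    rw [h2, div_mul_cancel₀ _ hb'.ne'] at h3
    nlinarith

lemma norm_le_sum_abs (v : EuclideanSpace ℝ (Fin d)) : ‖v‖ ≤ ∑ i, |v i| := by
  rw [EuclideanSpace.norm_eq]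
  have h1 : ∑ i, ‖v i‖ ^ 2 ≤ (∑ i, |v i|) ^ 2 := by
    simpa [Real.norm_eq_abs, sq_abs] using
      Finset.sum_sq_le_sq_sum_of_nonneg (s := Finset.univ)
        (f := fun i => |v i|) (fun i _ => abs_nonneg _)
  calc Real.sqrt (∑ i, ‖v i‖ ^ 2) ≤ Real.sqrt ((∑ i, |v i|) ^ 2) := Real.sqrt_le_sqrt h1
    _ = ∑ i, |v i| := Real.sqrt_sq (Finset.sum_nonneg fun i _ => abs_nonneg _)

lemma integrable_exp_inner_vol (w : EuclideanSpace ℝ (Fin d)) :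
    Integrable (fun v : EuclideanSpace ℝ (Fin d) => rexp (⟪w, v⟫ - ‖v‖ ^ 2 / 2)) := by
  have h := (GaussianFourier.integrable_cexp_neg_mul_sq_norm_add (V := EuclideanSpace ℝ (Fin d))
    (b := (1/2 : ℂ)) (by norm_num) 1 w).norm
  refine h.congr ?_
  filter_upwards with v
  rw [Complex.norm_exp,
    show (-(1/2 : ℂ) * (‖v‖:ℂ) ^ 2 + 1 * ((⟪w, v⟫ : ℝ) : ℂ))
      = (((⟪w, v⟫ - ‖v‖ ^ 2 / 2 : ℝ)) : ℂ) by push_cast; ring,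
    Complex.ofReal_re]

lemma integral_exp_inner_vol (w : EuclideanSpace ℝ (Fin d)) :
    ∫ v : EuclideanSpace ℝ (Fin d), rexp (⟪w, v⟫ - ‖v‖ ^ 2 / 2)
      = (2 * π) ^ ((d : ℝ) / 2) * rexp (‖w‖ ^ 2 / 2) := by
  have h := GaussianFourier.integral_cexp_neg_mul_sq_norm_add
    (V := EuclideanSpace ℝ (Fin d)) (b := (1/2 : ℂ)) (by norm_num) 1 w
  have h1 : ∀ v : EuclideanSpace ℝ (Fin d),
      Complex.exp (-(1/2 : ℂ) * (‖v‖:ℂ) ^ 2 + 1 * ((⟪w, v⟫ : ℝ) : ℂ))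
        = ((rexp (⟪w, v⟫ - ‖v‖ ^ 2 / 2) : ℝ) : ℂ) := by
    intro v
    rw [Complex.ofReal_exp]
    congr 1
    push_cast
    ring
  simp only [h1] at h
  have h2 : ((π : ℂ) / (1/2 : ℂ)) ^ ((Module.finrank ℝ (EuclideanSpace ℝ (Fin d)) : ℂ) / 2)
        * Complex.exp ((1:ℂ) ^ 2 * (‖w‖:ℂ) ^ 2 / (4 * (1/2 : ℂ)))
      = (((2 * π) ^ ((d : ℝ) / 2) * rexp (‖w‖ ^ 2 / 2) : ℝ) : ℂ) := by
    have hd : (Module.finrank ℝ (EuclideanSpace ℝ (Fin d)) : ℂ) = (d : ℂ) := by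
      norm_cast; exact finrank_euclideanSpace_fin
    have h3 : ((π : ℂ) / (1/2 : ℂ)) = ((2 * π : ℝ) : ℂ) := by push_cast; ring
    have h4 : ((d : ℂ) / 2) = (((d : ℝ) / 2 : ℝ) : ℂ) := by push_cast; ring
    have h5 : ((1:ℂ) ^ 2 * (‖w‖:ℂ) ^ 2 / (4 * (1/2 : ℂ)))
        = ((‖w‖ ^ 2 / 2 : ℝ) : ℂ) := by push_cast; ring
    rw [hd, h3, h4, h5, ← Complex.ofReal_cpow (by positivity), ← Complex.ofReal_exp,
      ← Complex.ofReal_mul]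
  apply Complex.ofReal_injective
  calc ((∫ v : EuclideanSpace ℝ (Fin d), rexp (⟪w, v⟫ - ‖v‖ ^ 2 / 2) : ℝ) : ℂ)
      = ∫ v : EuclideanSpace ℝ (Fin d), ((rexp (⟪w, v⟫ - ‖v‖ ^ 2 / 2) : ℝ) : ℂ) := by
        change Complex.ofRealLI _ = _
        rw [← Complex.ofRealLI.integral_comp_comm]
        rfl
    _ = (((2 * π) ^ ((d : ℝ) / 2) * rexp (‖w‖ ^ 2 / 2) : ℝ) : ℂ) := h.trans h2


noncomputable def gaussFun (d : ℕ) (v : EuclideanSpace ℝ (Fin d)) : ℝ≥0 :=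
  ⟨(2 * π) ^ (-(d : ℝ) / 2) * Real.exp (-‖v‖ ^ 2 / 2), by positivity⟩

lemma gaussFun_measurable : Measurable (gaussFun d) := by
  apply Measurable.subtype_mk
  fun_prop

lemma stdGaussian_eq :
    stdGaussian d = (volume : Measure (EuclideanSpace ℝ (Fin d))).withDensity
      (fun v => (gaussFun d v : ℝ≥0∞)) := by
  unfold stdGaussian
  congr 1
  funext v
  exact ENNReal.ofReal_eq_coe_nnreal _

lemma integrable_stdGaussian_iff {F : Type*} [NormedAddCommGroup F] [NormedSpace ℝ F]
    (g : EuclideanSpace ℝ (Fin d) → F) :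
    Integrable g (stdGaussian d) ↔
      Integrable (fun v => ((gaussFun d v : ℝ)) • g v) volume := by
  rw [stdGaussian_eq, integrable_withDensity_iff_integrable_smul gaussFun_measurable]
  simp_rw [NNReal.smul_def]

lemma integral_stdGaussian {F : Type*} [NormedAddCommGroup F] [NormedSpace ℝ F]
    (g : EuclideanSpace ℝ (Fin d) → F) :
    ∫ v, g v ∂(stdGaussian d) = ∫ v, ((gaussFun d v : ℝ)) • g v := by
  rw [stdGaussian_eq, integral_withDensity_eq_integral_smul gaussFun_measurable]
  simp_rw [NNReal.smul_def]

lemma gaussFun_smul (w v : EuclideanSpace ℝ (Fin d)) :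
    (gaussFun d v : ℝ) • rexp ⟪w, v⟫
      = (2 * π) ^ (-(d : ℝ) / 2) * rexp (⟪w, v⟫ - ‖v‖ ^ 2 / 2) := by
  show (2 * π) ^ (-(d : ℝ) / 2) * rexp (-‖v‖ ^ 2 / 2) * rexp ⟪w, v⟫ = _
  rw [mul_assoc, ← Real.exp_add]
  congr 2
  ring

lemma integrable_exp_inner (w : EuclideanSpace ℝ (Fin d)) :
    Integrable (fun v => rexp ⟪w, v⟫) (stdGaussian d) := by
  rw [integrable_stdGaussian_iff]
  simp_rw [gaussFun_smul]
  exact (integrable_exp_inner_vol w).const_mul _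

lemma integral_exp_inner (w : EuclideanSpace ℝ (Fin d)) :
    ∫ v, rexp ⟪w, v⟫ ∂(stdGaussian d) = rexp (‖w‖ ^ 2 / 2) := by
  rw [integral_stdGaussian]
  simp_rw [gaussFun_smul]
  rw [integral_const_mul, integral_exp_inner_vol, ← mul_assoc, ← Real.rpow_add (by positivity)]
  have hz : (-(d : ℝ) / 2 + (d : ℝ) / 2) = 0 := by ring
  rw [hz, Real.rpow_zero, one_mul]

lemma exp_abs_le (x : ℝ) : rexp |x| ≤ rexp x + rexp (-x) := by
  rcases abs_choice x with hx | hx <;> rw [hx] <;>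
    [linarith [(Real.exp_pos (-x)).le]; linarith [(Real.exp_pos x).le]]


/-- If `h` is a probability density with respect to the standard Gaussian `γ` on `ℝ^d`
with finite relative entropy `Ent_γ(h) = ∫ h log h dγ`, then the first moment
`∫ ‖v‖ h(v) dγ(v)` is finite and the mean `m = ∫ v h(v) dγ(v)` satisfies
`‖m‖² ≤ 2 Ent_γ(h)`. -/
theorem mean_sq_le_two_entropy (d : ℕ) (h : EuclideanSpace ℝ (Fin d) → ℝ)
    (hmeas : Measurable h) (hnonneg : ∀ v, 0 ≤ h v)
    (hmass : ∫ v, h v ∂(stdGaussian d) = 1)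
    (hent : Integrable (fun v => h v * Real.log (h v)) (stdGaussian d)) :
    Integrable (fun v => ‖v‖ * h v) (stdGaussian d) ∧
      ‖∫ v, h v • v ∂(stdGaussian d)‖ ^ 2
        ≤ 2 * ∫ v, h v * Real.log (h v) ∂(stdGaussian d) := by
  set γ := stdGaussian d with hγ
  -- h is integrable
  have hInt_h : Integrable h γ := by
    by_contra hc
    rw [integral_undef hc] at hmass
    norm_num at hmass
  -- coordinate exponentials are integrable
  have hExp : ∀ i : Fin d, Integrable (fun v : EuclideanSpace ℝ (Fin d) =>
      rexp (v i) + rexp (-(v i))) γ := by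
    intro i
    have h1 := integrable_exp_inner (d := d) (EuclideanSpace.single i (1:ℝ))
    have h2 := integrable_exp_inner (d := d) (EuclideanSpace.single i (-1:ℝ))
    simp only [EuclideanSpace.inner_single_left, RCLike.conj_to_real, one_mul, neg_one_mul,
      starRingEnd_apply, star_trivial] at h1 h2
    exact h1.add h2
  set G : EuclideanSpace ℝ (Fin d) → ℝ := fun v =>
    (d : ℝ) * |h v * Real.log (h v)| + ∑ i, (rexp (v i) + rexp (-(v i))) with hGdef
  have hGint : Integrable G γ :=
    (hent.abs.const_mul _).add (integrable_finset_sum _ fun i _ => hExp i)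
  have hbound : ∀ v : EuclideanSpace ℝ (Fin d), ‖v‖ * h v ≤ G v := by
    intro v
    calc ‖v‖ * h v ≤ (∑ i, |v i|) * h v :=
          mul_le_mul_of_nonneg_right (norm_le_sum_abs v) (hnonneg v)
      _ = ∑ i, |v i| * h v := by rw [Finset.sum_mul]
      _ ≤ ∑ i, (|h v * Real.log (h v)| + (rexp (v i) + rexp (-(v i)))) := by
          refine Finset.sum_le_sum fun i _ => ?_
          have h1 := young |v i| (h v) (hnonneg v)
          have h2 := _root_.exp_abs_le (v i)
          have h3 : h v * Real.log (h v) ≤ |h v * Real.log (h v)| := le_abs_self _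
          have h4 := hnonneg v
          linarith
      _ = G v := by
          rw [hGdef, Finset.sum_add_distrib, Finset.sum_const, Finset.card_univ,
            Fintype.card_fin, nsmul_eq_mul]
  have first : Integrable (fun v => ‖v‖ * h v) γ := by
    refine hGint.mono' ((measurable_id.norm.mul hmeas).aestronglyMeasurable) ?_
    filter_upwards with v
    rw [Real.norm_eq_abs, abs_of_nonneg (mul_nonneg (norm_nonneg _) (hnonneg v))]
    exact hbound v
  refine ⟨first, ?_⟩
  -- integrability of the vector integrand
  have hInt_sm : Integrable (fun v => h v • v) γ := by
    refine first.mono' (hmeas.aestronglyMeasurable.smul aestronglyMeasurable_id) ?_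
    filter_upwards with v
    rw [norm_smul, Real.norm_eq_abs, abs_of_nonneg (hnonneg v)]
    exact le_of_eq (mul_comm _ _)
  set m := ∫ v, h v • v ∂γ with hm
  have hIntInner : Integrable (fun v => h v * ⟪m, v⟫) γ := by
    refine (first.const_mul ‖m‖).mono'
      ((hmeas.mul ((Continuous.inner continuous_const continuous_id).measurable)).aestronglyMeasurable) ?_
    filter_upwards with v
    rw [Real.norm_eq_abs, abs_mul, abs_of_nonneg (hnonneg v)]
    calc h v * |⟪m, v⟫| ≤ h v * (‖m‖ * ‖v‖) :=
          mul_le_mul_of_nonneg_left (abs_real_inner_le_norm m v) (hnonneg v)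
      _ = ‖m‖ * (‖v‖ * h v) := by ring
  have hIntExp : Integrable (fun v => rexp (⟪m, v⟫ - ‖m‖ ^ 2 / 2)) γ := by
    have := (integrable_exp_inner (d := d) m).mul_const (rexp (-(‖m‖ ^ 2 / 2)))
    refine this.congr (Filter.Eventually.of_forall fun v => ?_)
    show rexp ⟪m, v⟫ * rexp (-(‖m‖ ^ 2 / 2)) = rexp (⟪m, v⟫ - ‖m‖ ^ 2 / 2)
    rw [← Real.exp_add, sub_eq_add_neg]
  -- the Gibbs inequality, pointwise
  have hpt : ∀ v, h v * ⟪m, v⟫ - (‖m‖ ^ 2 / 2) * h v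
      ≤ h v * Real.log (h v) - h v + rexp (⟪m, v⟫ - ‖m‖ ^ 2 / 2) := by
    intro v
    have := young (⟪m, v⟫ - ‖m‖ ^ 2 / 2) (h v) (hnonneg v)
    nlinarith [this]
  have hLHSint : Integrable (fun v => h v * ⟪m, v⟫ - (‖m‖ ^ 2 / 2) * h v) γ :=
    hIntInner.sub (hInt_h.const_mul _)
  have hRHSint : Integrable
      (fun v => h v * Real.log (h v) - h v + rexp (⟪m, v⟫ - ‖m‖ ^ 2 / 2)) γ :=
    (hent.sub hInt_h).add hIntExp
  have hcore := integral_mono hLHSint hRHSint hpt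
  -- compute the left integral
  have hL : ∫ v, (h v * ⟪m, v⟫ - (‖m‖ ^ 2 / 2) * h v) ∂γ = ‖m‖ ^ 2 - ‖m‖ ^ 2 / 2 := by
    rw [integral_sub hIntInner (hInt_h.const_mul _), integral_const_mul, hmass, mul_one]
    congr 1
    have : ∀ v : EuclideanSpace ℝ (Fin d), h v * ⟪m, v⟫ = ⟪m, h v • v⟫ := fun v => by
      rw [real_inner_smul_right]
    simp_rw [this]
    rw [integral_inner hInt_sm m, real_inner_self_eq_norm_sq]
  -- compute the right integral
  have hR : ∫ v, (h v * Real.log (h v) - h v + rexp (⟪m, v⟫ - ‖m‖ ^ 2 / 2)) ∂γ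
      = ∫ v, h v * Real.log (h v) ∂γ := by
    have hsub : Integrable (fun v => h v * Real.log (h v) - h v) γ := hent.sub hInt_h
    rw [integral_add hsub hIntExp, integral_sub hent hInt_h, hmass]
    have hE : ∫ v, rexp (⟪m, v⟫ - ‖m‖ ^ 2 / 2) ∂γ = 1 := by
      have : ∀ v : EuclideanSpace ℝ (Fin d), rexp (⟪m, v⟫ - ‖m‖ ^ 2 / 2)
          = rexp ⟪m, v⟫ * rexp (-(‖m‖ ^ 2 / 2)) := fun v => by
        rw [← Real.exp_add, sub_eq_add_neg]
      simp_rw [this]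
      rw [integral_mul_const, integral_exp_inner, ← Real.exp_add]
      norm_num
    rw [hE]
    ring
  rw [hL, hR] at hcore
  linarith
end

section
/- Let μ_x be a probability measure on ℝ^d, let γ be the standard Gaussian measure on ℝ^d, and let μ = μ_x ⊗ γ be the product measure on ℝ^d × ℝ^d. Let g : ℝ^d × ℝ^d → [0,∞) be measurable with ∫ g dμ = 1, define the position marginal q(x) = ∫ g(x,v) dγ(v), and assume the velocity entropy Ent_v(g) := ∫∫ g(x,v) log(g(x,v)/q(x)) dγ(v) dμ_x(x) is finite (with the conventions 0·log 0 = 0, and the integrand taken to be 0 where q(x) = 0, since g(x,·) = 0 γ-a.e. there). Then for μ_x-a.e. x with q(x) > 0 the current j(x) := ∫ v g(x,v) dγ(v) is well-defined (the integral converges absolutely), and ∫_{\{q>0\}} ‖j(x)‖²/q(x) dμ_x(x) ≤ 2 Ent_v(g). -/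
open MeasureTheory Real

open scoped ENNReal NNReal

namespace CB

variable {d : ℕ}

noncomputable def φ (d : ℕ) (v : EuclideanSpace ℝ (Fin d)) : ℝ :=
  (2 * π) ^ (-(d : ℝ) / 2) * Real.exp (-‖v‖ ^ 2 / 2)

lemma φ_nonneg (v : EuclideanSpace ℝ (Fin d)) : 0 ≤ φ d v :=
  mul_nonneg (Real.rpow_nonneg (by positivity) _) (Real.exp_nonneg _)

lemma φ_meas : Measurable (φ d) := by
  unfold φ; fun_prop

lemma integral_stdGaussian (F : EuclideanSpace ℝ (Fin d) → ℝ) :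
    ∫ v, F v ∂(stdGaussian d) = ∫ v, φ d v * F v := by
  have : stdGaussian d
      = (volume : Measure (EuclideanSpace ℝ (Fin d))).withDensity
        (fun v => ((φ d v).toNNReal : ℝ≥0∞)) := rfl
  rw [this, integral_withDensity_eq_integral_smul φ_meas.real_toNNReal F]
  congr 1 with v
  simp [NNReal.smul_def, Real.coe_toNNReal _ (φ_nonneg v)]

lemma integrable_stdGaussian_iff (F : EuclideanSpace ℝ (Fin d) → ℝ) :
    Integrable F (stdGaussian d) ↔ Integrable (fun v => φ d v * F v) := by
  rw [stdGaussian, integrable_withDensity_iff (by exact φ_meas.ennreal_ofReal) (by simp)]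
  refine integrable_congr (Filter.Eventually.of_forall fun v => ?_)
  show F v * (ENNReal.ofReal (φ d v)).toReal = φ d v * F v
  rw [ENNReal.toReal_ofReal (φ_nonneg v), mul_comm]

section OneD

lemma oneD_integrable (a : ℝ) : Integrable (fun t : ℝ => Real.exp (a * t - t ^ 2 / 2)) := by
  have h : (fun t : ℝ => Real.exp (a * t - t ^ 2 / 2))
      = fun t => Real.exp (a ^ 2 / 2) * Real.exp (-(1/2 : ℝ) * (t - a) ^ 2) := by
    funext t
    rw [← Real.exp_add]
    congr 1
    ring
  rw [h]
  exact ((integrable_exp_neg_mul_sq (by norm_num : (0:ℝ) < 1/2)).comp_sub_right a).const_mul _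

lemma oneD_integral (a : ℝ) :
    ∫ t : ℝ, Real.exp (a * t - t ^ 2 / 2) = Real.exp (a ^ 2 / 2) * Real.sqrt (2 * π) := by
  have h : (fun t : ℝ => Real.exp (a * t - t ^ 2 / 2))
      = fun t => Real.exp (a ^ 2 / 2) * Real.exp (-(1/2 : ℝ) * (t - a) ^ 2) := by
    funext t; rw [← Real.exp_add]; congr 1; ring
  rw [h, integral_const_mul, integral_sub_right_eq_self (fun t => Real.exp (-(1/2:ℝ) * t ^ 2)) a,
    integral_gaussian]
  rw [show (2:ℝ) * π = π * 2 by ring, Real.sqrt_mul pi_nonneg]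
  norm_num

lemma oneD_integrable_abs (a : ℝ) :
    Integrable (fun t : ℝ => Real.exp (a * |t| - t ^ 2 / 2)) := by
  refine ((oneD_integrable a).add (oneD_integrable (-a))).mono'
    (Measurable.aestronglyMeasurable (by measurability)) ?_
  refine Filter.Eventually.of_forall fun t => ?_
  simp only [Pi.add_apply]
  rw [Real.norm_eq_abs, abs_of_nonneg (Real.exp_nonneg _)]
  rcases abs_cases t with ⟨h, _⟩ | ⟨h, _⟩
  · rw [h]
    exact le_add_of_nonneg_right (Real.exp_nonneg _)
  · rw [h, show a * -t = -a * t by ring]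
    exact le_add_of_nonneg_left (Real.exp_nonneg _)

end OneD

section Pi

noncomputable def ψ (d : ℕ) (y : Fin d → ℝ) : ℝ :=
  ∏ i, ((2 * π) ^ (-(1:ℝ) / 2) * Real.exp (-(y i) ^ 2 / 2))

lemma ψ_nonneg (y : Fin d → ℝ) : 0 ≤ ψ d y :=
  Finset.prod_nonneg fun i _ => mul_nonneg (Real.rpow_nonneg (by positivity) _) (Real.exp_nonneg _)

lemma norm_symm_sq (y : Fin d → ℝ) :
    ‖(MeasurableEquiv.toLp 2 (Fin d → ℝ)) y‖ ^ 2 = ∑ i, (y i) ^ 2 := by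
  rw [EuclideanSpace.norm_eq, Real.sq_sqrt (by positivity)]
  simp [MeasurableEquiv.toLp_apply, PiLp.toLp_apply, sq_abs]

lemma inner_symm (l : EuclideanSpace ℝ (Fin d)) (y : Fin d → ℝ) :
    (inner ℝ l ((MeasurableEquiv.toLp 2 (Fin d → ℝ)) y) : ℝ) = ∑ i, l i * y i := by
  simp [PiLp.inner_apply, MeasurableEquiv.toLp_apply, PiLp.toLp_apply, mul_comm,
    RCLike.inner_apply, conj_trivial]

lemma norm_sq_eq (l : EuclideanSpace ℝ (Fin d)) : ‖l‖ ^ 2 = ∑ i, (l i) ^ 2 := by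
  rw [EuclideanSpace.norm_eq, Real.sq_sqrt (by positivity)]
  simp [sq_abs]

lemma norm_symm_le (y : Fin d → ℝ) :
    ‖(MeasurableEquiv.toLp 2 (Fin d → ℝ)) y‖ ≤ ∑ i, |y i| := by
  have h1 : ‖(MeasurableEquiv.toLp 2 (Fin d → ℝ)) y‖
      = Real.sqrt (∑ i, (y i) ^ 2) := by
    rw [← norm_symm_sq, Real.sqrt_sq (norm_nonneg _)]
  rw [h1]
  have h2 : ∑ i, (y i) ^ 2 ≤ (∑ i, |y i|) ^ 2 := by
    rw [sq, Finset.sum_mul]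
    refine Finset.sum_le_sum fun i _ => ?_
    rw [← sq_abs, sq]
    exact mul_le_mul_of_nonneg_left
      (Finset.single_le_sum (fun j _ => abs_nonneg (y j)) (Finset.mem_univ i)) (abs_nonneg _)
  calc Real.sqrt (∑ i, (y i) ^ 2) ≤ Real.sqrt ((∑ i, |y i|) ^ 2) := Real.sqrt_le_sqrt h2
  _ = ∑ i, |y i| := Real.sqrt_sq (Finset.sum_nonneg fun i _ => abs_nonneg _)

lemma φ_symm (y : Fin d → ℝ) :
    φ d ((MeasurableEquiv.toLp 2 (Fin d → ℝ)) y) = ψ d y := by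
  unfold φ ψ
  rw [norm_symm_sq, Finset.prod_mul_distrib, Finset.prod_const, ← Real.exp_sum,
    Finset.card_univ, Fintype.card_fin, ← Real.rpow_natCast ((2*π) ^ (-(1:ℝ)/2)) d,
    ← Real.rpow_mul (by positivity)]
  congr 2
  · ring
  · rw [← Finset.sum_div, ← Finset.sum_neg_distrib]

lemma prodG (l : EuclideanSpace ℝ (Fin d)) (y : Fin d → ℝ) :
    ψ d y * Real.exp (∑ i, l i * y i)
      = ∏ i, ((2 * π) ^ (-(1:ℝ) / 2) * Real.exp (l i * y i - (y i) ^ 2 / 2)) := by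
  unfold ψ
  rw [Real.exp_sum, ← Finset.prod_mul_distrib]
  congr 1 with i
  rw [mul_assoc, ← Real.exp_add]
  congr 2
  ring

lemma c_mul_sqrt : (2 * π) ^ (-(1:ℝ)/2) * Real.sqrt (2 * π) = 1 := by
  rw [Real.sqrt_eq_rpow, ← Real.rpow_add (by positivity)]
  norm_num

lemma integral_psi_mul (F : EuclideanSpace ℝ (Fin d) → ℝ) :
    ∫ v, F v ∂(stdGaussian d)
      = ∫ y : Fin d → ℝ, ψ d y * F ((MeasurableEquiv.toLp 2 (Fin d → ℝ)) y) := by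
  rw [integral_stdGaussian,
    ← MeasurePreserving.integral_comp' (β := EuclideanSpace ℝ (Fin d)) (ν := (volume : Measure (EuclideanSpace ℝ (Fin d)))) (f := MeasurableEquiv.toLp 2 (Fin d → ℝ)) (by simpa using (MeasurePreserving.symm _
      (EuclideanSpace.volume_preserving_symm_measurableEquiv_toLp (Fin d)))) (fun v => φ d v * F v)]
  simp_rw [φ_symm]

lemma integrable_psi_mul_iff (F : EuclideanSpace ℝ (Fin d) → ℝ) :
    Integrable F (stdGaussian d) ↔
      Integrable (fun y : Fin d → ℝ =>
        ψ d y * F ((MeasurableEquiv.toLp 2 (Fin d → ℝ)) y)) := by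
  rw [integrable_stdGaussian_iff,
    ← MeasurePreserving.integrable_comp_emb (δ := EuclideanSpace ℝ (Fin d)) (ν := (volume : Measure (EuclideanSpace ℝ (Fin d)))) (f := ⇑(MeasurableEquiv.toLp 2 (Fin d → ℝ))) (by simpa using (MeasurePreserving.symm _
      (EuclideanSpace.volume_preserving_symm_measurableEquiv_toLp (Fin d))))
      (MeasurableEquiv.measurableEmbedding _) (g := fun v => φ d v * F v)]
  refine integrable_congr (Filter.Eventually.of_forall fun y => ?_)
  show φ d _ * F _ = _
  rw [φ_symm]

end Pi

section MGF

lemma integrable_exp_inner (l : EuclideanSpace ℝ (Fin d)) :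
    Integrable (fun v => Real.exp (inner ℝ l v : ℝ)) (stdGaussian d) := by
  rw [integrable_psi_mul_iff]
  have h : (fun y : Fin d → ℝ =>
      ψ d y * Real.exp (inner ℝ l ((MeasurableEquiv.toLp 2 (Fin d → ℝ)) y) : ℝ))
      = fun y => ∏ i, ((2 * π) ^ (-(1:ℝ) / 2) * Real.exp (l i * y i - (y i) ^ 2 / 2)) := by
    funext y
    rw [inner_symm, prodG]
  rw [h]
  exact Integrable.fintype_prod (f := fun i t => (2 * π) ^ (-(1:ℝ)/2) * Real.exp (l i * t - t ^ 2 / 2))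
    fun i => (oneD_integrable (l i)).const_mul _

lemma integral_exp_inner (l : EuclideanSpace ℝ (Fin d)) :
    ∫ v, Real.exp (inner ℝ l v : ℝ) ∂(stdGaussian d) = Real.exp (‖l‖ ^ 2 / 2) := by
  rw [integral_psi_mul]
  have h : (fun y : Fin d → ℝ =>
      ψ d y * Real.exp (inner ℝ l ((MeasurableEquiv.toLp 2 (Fin d → ℝ)) y) : ℝ))
      = fun y => ∏ i, ((2 * π) ^ (-(1:ℝ) / 2) * Real.exp (l i * y i - (y i) ^ 2 / 2)) := by
    funext y
    rw [inner_symm, prodG]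
  rw [h, volume_pi, integral_fintype_prod_eq_prod (ι := Fin d)
    (fun i t => (2 * π) ^ (-(1:ℝ)/2) * Real.exp (l i * t - t ^ 2 / 2))]
  have h2 : ∀ i : Fin d, ∫ t : ℝ, (2 * π) ^ (-(1:ℝ)/2) * Real.exp (l i * t - t ^ 2 / 2)
      = Real.exp ((l i) ^ 2 / 2) := by
    intro i
    rw [integral_const_mul, oneD_integral]
    rw [← mul_assoc, mul_comm ((2 * π) ^ (-(1:ℝ)/2)), mul_assoc, c_mul_sqrt, mul_one]
  rw [Finset.prod_congr rfl fun i _ => h2 i, ← Real.exp_sum, norm_sq_eq, Finset.sum_div]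

instance : IsProbabilityMeasure (stdGaussian d) := by
  constructor
  have h1 : Integrable (fun v : EuclideanSpace ℝ (Fin d) => φ d v * 1) := by
    rw [← integrable_stdGaussian_iff]
    have h0 := integrable_exp_inner (d := d) 0
    simpa using h0
  have h2 : ∫ v, φ d v * 1 = 1 := by
    have := integral_exp_inner (d := d) 0
    simp only [inner_zero_left, Real.exp_zero, norm_zero] at this
    rw [← integral_stdGaussian]
    simpa using this
  have hφint : Integrable (φ d) := by simpa using h1
  have hφ1 : ∫ v, φ d v = 1 := by simpa using h2
  have : stdGaussian d Set.univ = ∫⁻ v, ENNReal.ofReal (φ d v) := by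
    rw [stdGaussian, withDensity_apply _ MeasurableSet.univ, setLIntegral_univ]
    rfl
  rw [this, ← ofReal_integral_eq_lintegral_ofReal hφint
    (Filter.Eventually.of_forall φ_nonneg), hφ1, ENNReal.ofReal_one]

lemma integrable_exp_norm : Integrable (fun v : EuclideanSpace ℝ (Fin d) => Real.exp ‖v‖) (stdGaussian d) := by
  rw [integrable_psi_mul_iff]
  have hB : Integrable (fun y : Fin d → ℝ =>
      ∏ i, ((2 * π) ^ (-(1:ℝ)/2) * Real.exp (|y i| - (y i) ^ 2 / 2))) := by
    refine Integrable.fintype_prod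
      (f := fun i t => (2 * π) ^ (-(1:ℝ)/2) * Real.exp (|t| - t ^ 2 / 2)) fun i => ?_
    simpa using (oneD_integrable_abs 1).const_mul ((2 * π) ^ (-(1:ℝ)/2))
  refine hB.mono' ?_ (Filter.Eventually.of_forall fun y => ?_)
  · have hψm : Measurable (ψ d) := by
      unfold ψ
      exact Finset.measurable_prod _ fun i _ => by fun_prop
    exact (hψm.mul ((measurable_norm.comp
      (MeasurableEquiv.toLp 2 (Fin d → ℝ)).measurable).exp)).aestronglyMeasurable
  · rw [Real.norm_eq_abs, abs_of_nonneg (mul_nonneg (ψ_nonneg y) (Real.exp_nonneg _))]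
    calc ψ d y * Real.exp ‖(MeasurableEquiv.toLp 2 (Fin d → ℝ)) y‖
        ≤ ψ d y * Real.exp (∑ i, |y i|) :=
          mul_le_mul_of_nonneg_left (Real.exp_le_exp.mpr (norm_symm_le y)) (ψ_nonneg y)
      _ = ∏ i, ((2 * π) ^ (-(1:ℝ)/2) * Real.exp (|y i| - (y i) ^ 2 / 2)) := by
          unfold ψ
          rw [Real.exp_sum, ← Finset.prod_mul_distrib]
          congr 1 with i
          rw [mul_assoc, ← Real.exp_add]
          congr 2
          ring

end MGF


section Elementary

lemma young_ineq {a : ℝ} (t : ℝ) (ha : 0 ≤ a) :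
    a * t ≤ a * Real.log a - a + Real.exp t := by
  rcases eq_or_lt_of_le ha with h | h
  · rw [← h]
    simpa using Real.exp_nonneg t
  · have h1 : t - Real.log a + 1 ≤ Real.exp (t - Real.log a) := by
      have := Real.add_one_le_exp (t - Real.log a)
      linarith
    have h2 : a * (t - Real.log a + 1) ≤ a * Real.exp (t - Real.log a) :=
      mul_le_mul_of_nonneg_left h1 ha
    have h3 : a * Real.exp (t - Real.log a) = Real.exp t := by
      rw [Real.exp_sub, Real.exp_log h]
      field_simp
    nlinarith [h2, h3]

lemma ent_lb {a q : ℝ} (ha : 0 ≤ a) (hq : 0 < q) : a - q ≤ a * Real.log (a / q) := by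
  rcases eq_or_lt_of_le ha with h | h
  · rw [← h]
    simpa using hq.le
  · have h1 : Real.log (q / a) ≤ q / a - 1 := Real.log_le_sub_one_of_pos (by positivity)
    have h2 : Real.log (q / a) = - Real.log (a / q) := by
      rw [← Real.log_inv]
      congr 1
      field_simp
    have h3 : a * (1 - q / a) ≤ a * Real.log (a / q) := by
      refine mul_le_mul_of_nonneg_left ?_ ha
      rw [h2] at h1
      linarith
    have h4 : a * (1 - q / a) = a - q := by field_simp
    linarith

end Elementary

section Key

lemma key_lemma (d : ℕ) (h : EuclideanSpace ℝ (Fin d) → ℝ) (hm : Measurable h)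
    (hnn : ∀ v, 0 ≤ h v) (hint : Integrable h (stdGaussian d))
    {q : ℝ} (hq : 0 < q) (hqe : ∫ v, h v ∂(stdGaussian d) = q)
    (hentx : Integrable (fun v => h v * Real.log (h v / q)) (stdGaussian d)) :
    Integrable (fun v => h v • v) (stdGaussian d) ∧
      ‖∫ v, h v • v ∂(stdGaussian d)‖ ^ 2 / q
        ≤ 2 * ∫ v, h v * Real.log (h v / q) ∂(stdGaussian d) := by
  set γ := stdGaussian d with hγ
  set ρ : EuclideanSpace ℝ (Fin d) → ℝ := fun v => h v / q with hρ
  have hρm : Measurable ρ := hm.div_const q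
  have hρnn : ∀ v, 0 ≤ ρ v := fun v => div_nonneg (hnn v) hq.le
  have hρint : Integrable ρ γ := hint.div_const q
  have hρ1 : ∫ v, ρ v ∂γ = 1 := by
    rw [hρ, integral_div, hqe, div_self hq.ne']
  have hlog : ∀ v, ρ v * Real.log (ρ v) = (h v * Real.log (h v / q)) / q := fun v => by
    rw [hρ]; ring
  have hρlog : Integrable (fun v => ρ v * Real.log (ρ v)) γ := by
    simp_rw [hlog]; exact hentx.div_const q
  have hexp : Integrable (fun v : EuclideanSpace ℝ (Fin d) => Real.exp ‖v‖) γ :=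
    integrable_exp_norm
  have hA : Integrable (fun v => ρ v * Real.log (ρ v) - ρ v) γ := hρlog.sub hρint
  have hbound : Integrable (fun v : EuclideanSpace ℝ (Fin d) =>
      ρ v * Real.log (ρ v) - ρ v + Real.exp ‖v‖) γ := hA.add hexp
  have hsm : ∀ v : EuclideanSpace ℝ (Fin d), ‖ρ v • v‖ = ρ v * ‖v‖ := fun v => by
    rw [norm_smul, Real.norm_eq_abs, abs_of_nonneg (hρnn v)]
  have hρv : Integrable (fun v => ρ v • v) γ := by
    refine hbound.mono' ((hρm.smul measurable_id).aestronglyMeasurable) ?_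
    refine Filter.Eventually.of_forall fun v => ?_
    rw [hsm v]
    exact young_ineq ‖v‖ (hρnn v)
  set m := ∫ v, ρ v • v ∂γ with hmdef
  have hq_smul : (fun v : EuclideanSpace ℝ (Fin d) => h v • v)
      = fun v => q • (ρ v • v) := by
    funext v
    rw [smul_smul, hρ]
    congr 1
    field_simp
  have hhv : Integrable (fun v => h v • v) γ := by
    rw [hq_smul]; exact hρv.smul q
  refine ⟨hhv, ?_⟩
  have hDV : ‖m‖ ^ 2 / 2 ≤ ∫ v, ρ v * Real.log (ρ v) ∂γ := by
    have hinner : Integrable (fun v => (inner ℝ m (ρ v • v) : ℝ)) γ := by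
      refine (hρv.norm.const_mul ‖m‖).mono' ?_ ?_
      · exact (Measurable.inner measurable_const (hρm.smul measurable_id)).aestronglyMeasurable
      · refine Filter.Eventually.of_forall fun v => ?_
        rw [Real.norm_eq_abs]
        exact abs_real_inner_le_norm m _
    have hexp2 : Integrable (fun v : EuclideanSpace ℝ (Fin d) =>
        Real.exp ((inner ℝ m v : ℝ) - ‖m‖ ^ 2 / 2)) γ := by
      simp_rw [Real.exp_sub]
      exact (integrable_exp_inner m).div_const _
    have hLHSint : Integrable
        (fun v => (inner ℝ m (ρ v • v) : ℝ) - ρ v * (‖m‖ ^ 2 / 2)) γ :=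
      hinner.sub (hρint.mul_const _)
    have hRHSint : Integrable (fun v =>
        ρ v * Real.log (ρ v) - ρ v + Real.exp ((inner ℝ m v : ℝ) - ‖m‖ ^ 2 / 2)) γ :=
      (hρlog.sub hρint).add hexp2
    have hpt : ∀ v, (inner ℝ m (ρ v • v) : ℝ) - ρ v * (‖m‖ ^ 2 / 2)
        ≤ ρ v * Real.log (ρ v) - ρ v + Real.exp ((inner ℝ m v : ℝ) - ‖m‖ ^ 2 / 2) := by
      intro v
      have h1 := young_ineq ((inner ℝ m v : ℝ) - ‖m‖ ^ 2 / 2) (hρnn v)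
      have h2 : (inner ℝ m (ρ v • v) : ℝ) = ρ v * (inner ℝ m v : ℝ) :=
        real_inner_smul_right m v (ρ v)
      rw [h2]
      nlinarith [h1]
    have hle := integral_mono hLHSint hRHSint hpt
    have hL : ∫ v, ((inner ℝ m (ρ v • v) : ℝ) - ρ v * (‖m‖ ^ 2 / 2)) ∂γ = ‖m‖ ^ 2 / 2 := by
      rw [integral_sub hinner (hρint.mul_const _), integral_inner hρv,
        integral_mul_const, hρ1, ← hmdef, real_inner_self_eq_norm_sq]
      ring
    have hR : ∫ v, (ρ v * Real.log (ρ v) - ρ v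
        + Real.exp ((inner ℝ m v : ℝ) - ‖m‖ ^ 2 / 2)) ∂γ
        = ∫ v, ρ v * Real.log (ρ v) ∂γ := by
      rw [integral_add hA hexp2, integral_sub hρlog hρint, hρ1]
      have : ∫ v, Real.exp ((inner ℝ m v : ℝ) - ‖m‖ ^ 2 / 2) ∂γ = 1 := by
        simp_rw [Real.exp_sub]
        rw [integral_div, integral_exp_inner m, div_self (Real.exp_ne_zero _)]
      rw [this]
      ring
    rw [hL, hR] at hle
    exact hle
  have hEnt : ∫ v, h v * Real.log (h v / q) ∂γ = q * ∫ v, ρ v * Real.log (ρ v) ∂γ := by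
    simp_rw [hlog]
    rw [integral_div]
    field_simp
  have hjm : ∫ v, h v • v ∂γ = q • m := by
    rw [hq_smul, integral_smul]
  rw [hjm, hEnt, norm_smul, Real.norm_eq_abs, abs_of_nonneg hq.le, mul_pow]
  rw [show q ^ 2 * ‖m‖ ^ 2 / q = q * ‖m‖ ^ 2 by field_simp]
  nlinarith [hDV, hq]

end Key

end CB

/-- Current bound: if `g` is a probability density with respect to `μ_x ⊗ γ` with finite
velocity entropy `Ent_v(g) = ∫∫ g log(g/q) dγ dμ_x` (where `q(x) = ∫ g(x,v) dγ(v)` is the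
position marginal), then for `μ_x`-a.e. `x` with `q(x) > 0` the current
`j(x) = ∫ v g(x,v) dγ(v)` is well-defined, and `∫_{q>0} ‖j‖²/q dμ_x ≤ 2 Ent_v(g)`. -/
theorem current_energy_le_two_velocity_entropy (d : ℕ)
    (μx : Measure (EuclideanSpace ℝ (Fin d))) [IsProbabilityMeasure μx]
    (g : EuclideanSpace ℝ (Fin d) × EuclideanSpace ℝ (Fin d) → ℝ)
    (hmeas : Measurable g) (hnonneg : ∀ p, 0 ≤ g p)
    (hmass : ∫ p, g p ∂(μx.prod (stdGaussian d)) = 1)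
    (q : EuclideanSpace ℝ (Fin d) → ℝ)
    (hq : q = fun x => ∫ v, g (x, v) ∂(stdGaussian d))
    (hent : Integrable (fun p => g p * Real.log (g p / q p.1)) (μx.prod (stdGaussian d)))
    (j : EuclideanSpace ℝ (Fin d) → EuclideanSpace ℝ (Fin d))
    (hj : j = fun x => ∫ v, g (x, v) • v ∂(stdGaussian d)) :
    (∀ᵐ x ∂μx, 0 < q x → Integrable (fun v => g (x, v) • v) (stdGaussian d)) ∧
      ∫⁻ x in {x | 0 < q x}, ENNReal.ofReal (‖j x‖ ^ 2 / q x) ∂μx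
        ≤ ENNReal.ofReal
            (2 * ∫ p, g p * Real.log (g p / q p.1) ∂(μx.prod (stdGaussian d))) := by
  have hgint : Integrable g (μx.prod (stdGaussian d)) := by
    by_contra hc
    rw [integral_undef hc] at hmass
    norm_num at hmass
  have hae1 : ∀ᵐ x ∂μx, Integrable (fun v => g (x, v)) (stdGaussian d) :=
    hgint.prod_right_ae
  have hae2 : ∀ᵐ x ∂μx,
      Integrable (fun v => g (x, v) * Real.log (g (x, v) / q x)) (stdGaussian d) :=
    hent.prod_right_ae
  have hkey : ∀ᵐ x ∂μx, 0 < q x →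
      (Integrable (fun v => g (x, v) • v) (stdGaussian d) ∧
        ‖∫ v, g (x, v) • v ∂(stdGaussian d)‖ ^ 2 / q x
          ≤ 2 * ∫ v, g (x, v) * Real.log (g (x, v) / q x) ∂(stdGaussian d)) := by
    filter_upwards [hae1, hae2] with x h1 h2 hpos
    have hqx : ∫ v, g (x, v) ∂(stdGaussian d) = q x := by rw [hq]
    exact CB.key_lemma d (fun v => g (x, v)) (hmeas.comp measurable_prodMk_left)
      (fun v => hnonneg _) h1 hpos hqx h2
  refine ⟨hkey.mono fun x hx hpos => (hx hpos).1, ?_⟩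
  set F : EuclideanSpace ℝ (Fin d) → ℝ :=
    fun x => ∫ v, g (x, v) * Real.log (g (x, v) / q x) ∂(stdGaussian d) with hF
  have hFint : Integrable F μx := hent.integral_prod_left
  have hFeq : ∫ x, F x ∂μx
      = ∫ p, g p * Real.log (g p / q p.1) ∂(μx.prod (stdGaussian d)) :=
    (integral_prod _ hent).symm
  have hF0 : ∀ᵐ x ∂μx, 0 ≤ F x := by
    filter_upwards [hae1, hae2] with x h1 h2
    have hqx : ∫ v, g (x, v) ∂(stdGaussian d) = q x := by rw [hq]
    have hqnn : (0:ℝ) ≤ q x := hqx ▸ integral_nonneg fun v => hnonneg (x, v)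
    rcases lt_or_eq_of_le hqnn with hpos | heq
    · have hsub : Integrable (fun v => g (x, v) - q x) (stdGaussian d) :=
        h1.sub (integrable_const (q x))
      have hmono := integral_mono hsub h2
        (fun v => CB.ent_lb (hnonneg (x, v)) hpos)
      rw [integral_sub h1 (integrable_const (q x)), integral_const] at hmono
      simp only [measure_univ, ENNReal.toReal_one, probReal_univ, one_smul, hqx] at hmono
      show (0:ℝ) ≤ ∫ v, g (x, v) * Real.log (g (x, v) / q x) ∂(stdGaussian d)
      linarith
    · have hz : (fun v => g (x, v)) =ᵐ[stdGaussian d] 0 :=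
        (integral_eq_zero_iff_of_nonneg_ae
          (Filter.Eventually.of_forall fun v => hnonneg (x, v)) h1).mp (by rw [hqx, ← heq])
      have hzero : F x = 0 := by
        have hcg : (fun v => g (x, v) * Real.log (g (x, v) / q x))
            =ᵐ[stdGaussian d] (fun _ => (0:ℝ)) := by
          filter_upwards [hz] with v hv
          simp only [Pi.zero_apply] at hv
          rw [hv]
          simp
        show (∫ v, g (x, v) * Real.log (g (x, v) / q x) ∂(stdGaussian d)) = 0
        rw [integral_congr_ae hcg, integral_zero]
      rw [hzero]
  have hqm : Measurable q := by
    rw [hq]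
    exact (hmeas.stronglyMeasurable.integral_prod_right').measurable
  have hS : MeasurableSet {x | 0 < q x} := measurableSet_lt measurable_const hqm
  calc ∫⁻ x in {x | 0 < q x}, ENNReal.ofReal (‖j x‖ ^ 2 / q x) ∂μx
      ≤ ∫⁻ x in {x | 0 < q x}, ENNReal.ofReal (2 * F x) ∂μx := by
        refine lintegral_mono_ae ?_
        filter_upwards [ae_restrict_of_ae hkey, ae_restrict_mem hS] with x hx hmem
        refine ENNReal.ofReal_le_ofReal ?_
        have := (hx hmem).2
        rw [hj, hF]
        exact this
    _ ≤ ∫⁻ x, ENNReal.ofReal (2 * F x) ∂μx := setLIntegral_le_lintegral _ _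
    _ = ENNReal.ofReal (∫ x, 2 * F x ∂μx) := by
        rw [ofReal_integral_eq_lintegral_ofReal (hFint.const_mul 2)
          (hF0.mono fun x hx => by
            simpa using mul_nonneg (by norm_num : (0:ℝ) ≤ 2) hx)]
    _ = ENNReal.ofReal
        (2 * ∫ p, g p * Real.log (g p / q p.1) ∂(μx.prod (stdGaussian d))) := by
        rw [integral_const_mul, hFeq]
end

section
/- Let γ be the standard Gaussian measure on ℝ^d. Let h : ℝ^d → (0,∞) be a C¹ function such that h and ‖∇h‖ are bounded on ℝ^d and ∫ h dγ = 1. Then ‖∫ v h(v) dγ(v)‖² ≤ ∫ ‖∇h(v)‖²/h(v) dγ(v). -/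
open MeasureTheory Real

open scoped ENNReal NNReal
open RealInnerProductSpace

section aux
variable {d : ℕ}

local notation "E" => EuclideanSpace ℝ (Fin d)

/-- The Gaussian density. -/
noncomputable def gDen (d : ℕ) (v : EuclideanSpace ℝ (Fin d)) : ℝ :=
  (2 * π) ^ (-(d : ℝ) / 2) * Real.exp (-‖v‖ ^ 2 / 2)

lemma gDen_pos (v : E) : 0 < gDen d v := by
  unfold gDen
  positivity

lemma gDen_cont : Continuous (gDen d) := by
  unfold gDen
  fun_prop

lemma hasFDerivAt_gDen (v : E) :
    HasFDerivAt (gDen d) ((-(gDen d v)) • (innerSL ℝ v)) v := by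
  have h0 : (fun v : E => -‖v‖ ^ 2 / 2) = fun v : E => (-(1:ℝ)/2) * ⟪v, v⟫ := by
    funext v; rw [real_inner_self_eq_norm_sq]; ring
  have hi : HasFDerivAt (fun v : E => ⟪v, v⟫)
      ((fderivInnerCLM ℝ (v, v)).comp ((ContinuousLinearMap.id ℝ E).prod
        (ContinuousLinearMap.id ℝ E))) v :=
    (hasFDerivAt_id v).inner ℝ (hasFDerivAt_id v)
  have h1 : HasFDerivAt (fun v : E => -‖v‖ ^ 2 / 2) (-(innerSL ℝ v)) v := by
    rw [h0]
    have := hi.const_mul (-(1:ℝ)/2)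
    refine this.congr_fderiv ?_
    apply ContinuousLinearMap.ext
    intro w
    simp [fderivInnerCLM, real_inner_comm, mul_comm]
    ring
  have h2 := (h1.exp).const_mul ((2 * π) ^ (-(d : ℝ) / 2))
  refine h2.congr_fderiv ?_
  apply ContinuousLinearMap.ext
  intro w
  simp [gDen]
  ring

lemma gDen_diff : Differentiable ℝ (gDen d) := fun v => (hasFDerivAt_gDen v).differentiableAt

lemma integrable_gDen : Integrable (gDen d) := by
  have h := (GaussianFourier.integrable_cexp_neg_mul_sq_norm_add
    (b := ((1:ℝ)/2 : ℂ)) (by norm_num) 0 (0 : E)).norm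
  have heq : (fun v : E => ‖Complex.exp (-((1:ℝ)/2 : ℂ) * ‖v‖ ^ 2 + 0 * ⟪(0:E), v⟫)‖)
      = fun v : E => Real.exp (-‖v‖ ^ 2 / 2) := by
    funext v
    rw [Complex.norm_exp]
    norm_num
    rw [← Complex.ofReal_pow, Complex.ofReal_re]
    ring
  rw [heq] at h
  exact (h.const_mul _)

lemma integrable_quarter : Integrable (fun v : E => Real.exp (-(1/4) * ‖v‖ ^ 2)) := by
  have h := (GaussianFourier.integrable_cexp_neg_mul_sq_norm_add
    (b := ((1:ℝ)/4 : ℂ)) (by norm_num) 0 (0 : E)).norm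
  have heq : (fun v : E => ‖Complex.exp (-((1:ℝ)/4 : ℂ) * ‖v‖ ^ 2 + 0 * ⟪(0:E), v⟫)‖)
      = fun v : E => Real.exp (-(1/4) * ‖v‖ ^ 2) := by
    funext v
    rw [Complex.norm_exp]
    norm_num
    rw [← Complex.ofReal_pow, Complex.ofReal_re]
  rw [heq] at h
  exact h

lemma norm_exp_bound (x : ℝ) (hx : 0 ≤ x) :
    x * Real.exp (-x ^ 2 / 2) ≤ Real.exp 1 * Real.exp (-(1/4) * x ^ 2) := by
  have h1 : x ≤ Real.exp (1 + x ^ 2 / 4) := by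
    calc x ≤ 1 + x ^ 2 / 4 := by nlinarith [sq_nonneg (x/2 - 1)]
    _ ≤ Real.exp (1 + x ^ 2 / 4) := by
        have := Real.add_one_le_exp (1 + x ^ 2 / 4); linarith
  calc x * Real.exp (-x ^ 2 / 2)
      ≤ Real.exp (1 + x ^ 2 / 4) * Real.exp (-x ^ 2 / 2) :=
        mul_le_mul_of_nonneg_right h1 (Real.exp_nonneg _)
    _ = Real.exp 1 * Real.exp (-(1/4) * x ^ 2) := by
        rw [← Real.exp_add, ← Real.exp_add]; ring_nf

lemma integrable_norm_gDen : Integrable (fun v : E => ‖v‖ * gDen d v) := by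
  have c0 : (0:ℝ) ≤ (2 * π) ^ (-(d : ℝ) / 2) := by positivity
  apply Integrable.mono' ((integrable_quarter.const_mul
    ((2 * π) ^ (-(d : ℝ) / 2) * Real.exp 1)))
  · exact (continuous_norm.mul gDen_cont).aestronglyMeasurable
  · filter_upwards with v
    have h2 := norm_exp_bound ‖v‖ (norm_nonneg v)
    have : ‖v‖ * gDen d v ≤ (2 * π) ^ (-(d : ℝ) / 2) * Real.exp 1 * Real.exp (-(1/4) * ‖v‖ ^ 2) := by
      unfold gDen
      calc ‖v‖ * ((2 * π) ^ (-(d : ℝ) / 2) * Real.exp (-‖v‖ ^ 2 / 2))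
          = (2 * π) ^ (-(d : ℝ) / 2) * (‖v‖ * Real.exp (-‖v‖ ^ 2 / 2)) := by ring
        _ ≤ (2 * π) ^ (-(d : ℝ) / 2) * (Real.exp 1 * Real.exp (-(1/4) * ‖v‖ ^ 2)) :=
            mul_le_mul_of_nonneg_left h2 c0
        _ = (2 * π) ^ (-(d : ℝ) / 2) * Real.exp 1 * Real.exp (-(1/4) * ‖v‖ ^ 2) := by ring
    have hnn : 0 ≤ ‖v‖ * gDen d v := mul_nonneg (norm_nonneg v) (gDen_pos v).le
    rw [Real.norm_eq_abs, abs_of_nonneg hnn]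
    exact this

lemma integrable_mul_gDen {g : E → ℝ} (hg : AEStronglyMeasurable g volume)
    {C : ℝ} (hC : ∀ v, |g v| ≤ C) : Integrable (fun v => g v * gDen d v) := by
  apply Integrable.mono' (integrable_gDen.const_mul C)
  · exact hg.mul gDen_cont.aestronglyMeasurable
  · filter_upwards with v
    rw [Real.norm_eq_abs, abs_mul, abs_of_nonneg (gDen_pos v).le]
    exact mul_le_mul_of_nonneg_right (hC v) (gDen_pos v).le

end aux

section ibp

lemma insertNth_eq_add {n : ℕ} (i : Fin (n+1)) (y : Fin n → ℝ) (x : ℝ) :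
    (i.insertNth x y : Fin (n+1) → ℝ)
      = (i.insertNth 0 y : Fin (n+1) → ℝ) + x • (Pi.single i 1 : Fin (n+1) → ℝ) := by
  funext j
  rcases eq_or_ne j i with rfl | hj
  · simp
  · obtain ⟨k, rfl⟩ := Fin.exists_succAbove_eq hj
    simp [Fin.insertNth_apply_succAbove, Pi.single_eq_of_ne (i.succAbove_ne k)]

lemma hasDerivAt_slice {n : ℕ} {F : (Fin (n+1) → ℝ) → ℝ} (hF : Differentiable ℝ F)
    (i : Fin (n+1)) (y : Fin n → ℝ) (t : ℝ) :
    HasDerivAt (fun x => F (i.insertNth x y))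
      (fderiv ℝ F (i.insertNth t y) (Pi.single i 1)) t := by
  have hins : HasDerivAt (fun x : ℝ => (i.insertNth x y : Fin (n+1) → ℝ))
      (Pi.single i 1) t := by
    have heq : (fun x : ℝ => (i.insertNth x y : Fin (n+1) → ℝ))
        = fun x : ℝ => (i.insertNth 0 y : Fin (n+1) → ℝ) + x • (Pi.single i 1 : Fin (n+1) → ℝ) := by
      funext x; exact insertNth_eq_add i y x
    rw [heq]
    simpa using ((hasDerivAt_id t).smul_const (Pi.single i (1:ℝ))).const_add
      (i.insertNth 0 y : Fin (n+1) → ℝ)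
  exact ((hF _).hasFDerivAt.comp_hasDerivAt t hins)

/-- Integration by parts on `ℝ^(n+1)`: the integral of a partial derivative vanishes. -/
lemma integral_partial_eq_zero {n : ℕ} {F : (Fin (n+1) → ℝ) → ℝ} (hF : Differentiable ℝ F)
    (i : Fin (n+1))
    (hFi : Integrable F volume)
    (hF'i : Integrable (fun v => fderiv ℝ F v (Pi.single i 1)) volume) :
    ∫ v : Fin (n+1) → ℝ, fderiv ℝ F v (Pi.single i 1) = 0 := by
  set e : (Fin (n+1) → ℝ) ≃ᵐ ℝ × (Fin n → ℝ) :=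
    MeasurableEquiv.piFinSuccAbove (fun _ : Fin (n+1) => ℝ) i with he
  have hmp : MeasurePreserving (⇑e.symm) (volume.prod volume) volume :=
    (volume_preserving_piFinSuccAbove (fun _ : Fin (n+1) => ℝ) i).symm e
  have h1 : ∫ v : Fin (n+1) → ℝ, fderiv ℝ F v (Pi.single i 1)
      = ∫ p : ℝ × (Fin n → ℝ), fderiv ℝ F (i.insertNth p.1 p.2) (Pi.single i 1) := by
    rw [← hmp.integral_comp (MeasurableEquiv.measurableEmbedding _)]
    exact integral_congr_ae (Filter.Eventually.of_forall fun p => rfl)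
  have hGprod : Integrable (fun p : ℝ × (Fin n → ℝ) =>
      fderiv ℝ F (i.insertNth p.1 p.2) (Pi.single i 1)) ((volume : Measure ℝ).prod volume) :=
    (hmp.integrable_comp_emb (MeasurableEquiv.measurableEmbedding _)).2 hF'i
  have hFprod : Integrable (fun p : ℝ × (Fin n → ℝ) =>
      F (i.insertNth p.1 p.2)) ((volume : Measure ℝ).prod volume) :=
    (hmp.integrable_comp_emb (MeasurableEquiv.measurableEmbedding _)).2 hFi
  rw [h1, show (volume : Measure (ℝ × (Fin n → ℝ))) = (volume : Measure ℝ).prod volume from rfl,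
    integral_prod_symm _ hGprod]
  have hslice : ∀ᵐ y : Fin n → ℝ,
      (∫ x : ℝ, fderiv ℝ F (i.insertNth x y) (Pi.single i 1)) = 0 := by
    filter_upwards [hGprod.prod_left_ae, hFprod.prod_left_ae] with y hg hf
    exact integral_eq_zero_of_hasDerivAt_of_integrable
      (fun t => hasDerivAt_slice hF i y t) hg hf
  rw [integral_congr_ae hslice, integral_zero]

/-- Integration by parts on Euclidean space. -/
lemma euclidean_integral_partial_eq_zero {d : ℕ} {F : EuclideanSpace ℝ (Fin d) → ℝ}
    (hF : Differentiable ℝ F) (i : Fin d)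
    (hFi : Integrable F volume)
    (hF'i : Integrable (fun v => fderiv ℝ F v (EuclideanSpace.single i 1)) volume) :
    ∫ v : EuclideanSpace ℝ (Fin d), fderiv ℝ F v (EuclideanSpace.single i 1) = 0 := by
  obtain ⟨n, rfl⟩ : ∃ n, d = n + 1 := ⟨d - 1, (Nat.succ_pred_eq_of_pos i.pos).symm⟩
  set Φ : EuclideanSpace ℝ (Fin (n+1)) ≃L[ℝ] (Fin (n+1) → ℝ) := EuclideanSpace.equiv (Fin (n+1)) ℝ
  set G : (Fin (n+1) → ℝ) → ℝ := F ∘ Φ.symm with hG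
  have hGdiff : Differentiable ℝ G := hF.comp Φ.symm.differentiable
  have hmp : MeasurePreserving (⇑(MeasurableEquiv.toLp 2 (Fin (n+1) → ℝ)))
      volume volume := (EuclideanSpace.volume_preserving_symm_measurableEquiv_toLp (Fin (n+1))).symm _
  have hcomp : ∀ y : Fin (n+1) → ℝ,
      fderiv ℝ G y (Pi.single i 1) = fderiv ℝ F (Φ.symm y) (EuclideanSpace.single i 1) := by
    intro y
    have : fderiv ℝ (F ∘ ⇑Φ.symm) y = (fderiv ℝ F (Φ.symm y)).comp (Φ.symm : _ →L[ℝ] _) :=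
      Φ.symm.comp_right_fderiv
    rw [hG, this]
    rfl
  have hGi : Integrable G volume :=
    (hmp.integrable_comp_emb (MeasurableEquiv.measurableEmbedding _)).2 hFi
  have hG'i : Integrable (fun y => fderiv ℝ G y (Pi.single i 1)) volume := by
    have := (hmp.integrable_comp_emb (MeasurableEquiv.measurableEmbedding _)).2 hF'i
    apply this.congr
    filter_upwards with y
    exact (hcomp y).symm
  have h0 := integral_partial_eq_zero hGdiff i hGi hG'i
  rw [show (∫ y : Fin (n+1) → ℝ, fderiv ℝ G y (Pi.single i 1))
      = ∫ y : Fin (n+1) → ℝ, fderiv ℝ F (Φ.symm y) (EuclideanSpace.single i 1) from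
      integral_congr_ae (Filter.Eventually.of_forall hcomp)] at h0
  rw [← hmp.integral_comp (MeasurableEquiv.measurableEmbedding _)
    (fun v => fderiv ℝ F v (EuclideanSpace.single i 1))]
  exact h0

end ibp

section gibp
variable {d : ℕ} {h : EuclideanSpace ℝ (Fin d) → ℝ}

lemma fderiv_eq_inner_gradient (h : EuclideanSpace ℝ (Fin d) → ℝ)
    (v w : EuclideanSpace ℝ (Fin d)) : fderiv ℝ h v w = ⟪gradient h v, w⟫ := by
  rw [gradient, ← InnerProductSpace.toDual_apply_apply, LinearIsometryEquiv.apply_symm_apply]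

lemma abs_fderiv_le (h : EuclideanSpace ℝ (Fin d) → ℝ) (v w : EuclideanSpace ℝ (Fin d)) :
    |fderiv ℝ h v w| ≤ ‖gradient h v‖ * ‖w‖ := by
  rw [fderiv_eq_inner_gradient]
  exact abs_real_inner_le_norm _ _

lemma continuous_gradient (hC1 : ContDiff ℝ 1 h) : Continuous (gradient h) := by
  have : gradient h = fun v =>
      (InnerProductSpace.toDual ℝ (EuclideanSpace ℝ (Fin d))).symm (fderiv ℝ h v) := rfl
  rw [this]
  exact (LinearIsometryEquiv.continuous _).comp (hC1.continuous_fderiv one_ne_zero)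

lemma gaussian_ibp (hC1 : ContDiff ℝ 1 h)
    (hbd : ∃ C, ∀ v, h v ≤ C) (hpos : ∀ v, 0 < h v)
    (hgradbd : ∃ C, ∀ v, ‖gradient h v‖ ≤ C) (i : Fin d) :
    ∫ v : EuclideanSpace ℝ (Fin d), h v * v i * gDen d v
      = ∫ v : EuclideanSpace ℝ (Fin d), fderiv ℝ h v (EuclideanSpace.single i 1) * gDen d v := by
  obtain ⟨C, hC⟩ := hbd
  obtain ⟨C', hC'⟩ := hgradbd
  have habs : ∀ v, |h v| ≤ C := fun v => by
    rw [abs_of_pos (hpos v)]; exact hC v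
  have hdiff : Differentiable ℝ h := hC1.differentiable one_ne_zero
  set F : EuclideanSpace ℝ (Fin d) → ℝ := fun v => h v * gDen d v with hF
  have hFdiff : Differentiable ℝ F := hdiff.mul gDen_diff
  have hFder : ∀ v, fderiv ℝ F v (EuclideanSpace.single i 1)
      = fderiv ℝ h v (EuclideanSpace.single i 1) * gDen d v - h v * v i * gDen d v := by
    intro v
    have hd : HasFDerivAt F
        (h v • ((-(gDen d v)) • (innerSL ℝ v)) + gDen d v • fderiv ℝ h v) v :=
      (hdiff v).hasFDerivAt.mul (hasFDerivAt_gDen v)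
    rw [hd.fderiv]
    simp [EuclideanSpace.inner_single_right, real_inner_comm]
    ring
  -- integrability
  have hfdercont : Continuous (fun v => fderiv ℝ h v (EuclideanSpace.single i 1)) :=
    (hC1.continuous_fderiv one_ne_zero).clm_apply continuous_const
  have hint1 : Integrable (fun v => fderiv ℝ h v (EuclideanSpace.single i 1) * gDen d v) := by
    apply integrable_mul_gDen hfdercont.aestronglyMeasurable (C := C')
    intro v
    calc |fderiv ℝ h v (EuclideanSpace.single i 1)|
        ≤ ‖gradient h v‖ * ‖EuclideanSpace.single i (1:ℝ)‖ := abs_fderiv_le h v _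
      _ ≤ C' := by rw [EuclideanSpace.norm_single, norm_one, mul_one]; exact hC' v
  have hvi : ∀ v : EuclideanSpace ℝ (Fin d), |(v i : ℝ)| ≤ ‖v‖ := by
    intro v
    have := abs_real_inner_le_norm v (EuclideanSpace.single i (1:ℝ))
    rw [EuclideanSpace.inner_single_right, EuclideanSpace.norm_single, norm_one, mul_one] at this
    simpa using this
  have hint2 : Integrable (fun v : EuclideanSpace ℝ (Fin d) => h v * v i * gDen d v) := by
    apply Integrable.mono' (integrable_norm_gDen.const_mul C)
    · exact ((hC1.continuous.mul (EuclideanSpace.proj i (𝕜 := ℝ)).continuous).mul gDen_cont).aestronglyMeasurable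
    · filter_upwards with v
      rw [Real.norm_eq_abs, abs_mul, abs_mul, abs_of_nonneg (gDen_pos v).le]
      calc |h v| * |(v i : ℝ)| * gDen d v ≤ C * ‖v‖ * gDen d v := by
            apply mul_le_mul_of_nonneg_right _ (gDen_pos v).le
            exact mul_le_mul (habs v) (hvi v) (abs_nonneg _)
              (le_trans (abs_nonneg _) (habs v))
        _ = C * (‖v‖ * gDen d v) := by ring
  have hFint : Integrable F := integrable_mul_gDen hC1.continuous.aestronglyMeasurable habs
  have hF'int : Integrable (fun v => fderiv ℝ F v (EuclideanSpace.single i 1)) := by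
    apply (hint1.sub hint2).congr
    filter_upwards with v
    exact (hFder v).symm
  have h0 := euclidean_integral_partial_eq_zero hFdiff i hFint hF'int
  rw [integral_congr_ae (Filter.Eventually.of_forall hFder), integral_sub hint1 hint2,
    sub_eq_zero] at h0
  exact h0.symm

end gibp

/-- If `h` is a strictly positive `C¹` probability density with respect to the standard
Gaussian `γ` on `ℝ^d`, with `h` and `‖∇h‖` bounded, then the squared norm of the mean
`∫ v h(v) dγ(v)` is bounded by the Fisher information `∫ ‖∇h‖²/h dγ` (which may be `+∞`). -/
theorem mean_sq_le_fisher_info (d : ℕ) (h : EuclideanSpace ℝ (Fin d) → ℝ)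
    (hC1 : ContDiff ℝ 1 h) (hpos : ∀ v, 0 < h v)
    (hbd : ∃ C, ∀ v, h v ≤ C)
    (hgradbd : ∃ C, ∀ v, ‖gradient h v‖ ≤ C)
    (hmass : ∫ v, h v ∂(stdGaussian d) = 1) :
    ENNReal.ofReal (‖∫ v, h v • v ∂(stdGaussian d)‖ ^ 2)
      ≤ ∫⁻ v, ENNReal.ofReal (‖gradient h v‖ ^ 2 / h v) ∂(stdGaussian d) := by
  obtain ⟨C, hC⟩ := hbd
  obtain ⟨C', hC'⟩ := hgradbd
  have habs : ∀ v, |h v| ≤ C := fun v => by rw [abs_of_pos (hpos v)]; exact hC v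
  set γ := stdGaussian d with hγ
  have hγd : γ = (volume : Measure (EuclideanSpace ℝ (Fin d))).withDensity
      (fun v => (((gDen d v).toNNReal : ℝ≥0) : ℝ≥0∞)) := rfl
  have hm : Measurable fun v : EuclideanSpace ℝ (Fin d) => (gDen d v).toNNReal :=
    gDen_cont.measurable.real_toNNReal
  have hsmul : ∀ (X : Type) [NormedAddCommGroup X] [NormedSpace ℝ X],
      ∀ (g : EuclideanSpace ℝ (Fin d) → X) (v : EuclideanSpace ℝ (Fin d)),
      (gDen d v).toNNReal • g v = gDen d v • g v := by
    intro X _ _ g v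
    rw [NNReal.smul_def, Real.coe_toNNReal _ (gDen_pos v).le]
  -- transfer of integrals and integrability
  have key_int : ∀ {X : Type} [NormedAddCommGroup X] [NormedSpace ℝ X],
      ∀ (g : EuclideanSpace ℝ (Fin d) → X),
      ∫ v, g v ∂γ = ∫ v, gDen d v • g v := by
    intro X _ _ g
    rw [hγd, integral_withDensity_eq_integral_smul hm g]
    exact integral_congr_ae (Filter.Eventually.of_forall fun v => hsmul X g v)
  have key_integrable : ∀ {X : Type} [NormedAddCommGroup X] [NormedSpace ℝ X],
      ∀ (g : EuclideanSpace ℝ (Fin d) → X),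
      Integrable (fun v => gDen d v • g v) volume → Integrable g γ := by
    intro X _ _ g hg
    rw [hγd, integrable_withDensity_iff_integrable_smul hm]
    apply hg.congr
    filter_upwards with v
    exact (hsmul X g v).symm
  have Ih : Integrable h γ := by
    apply key_integrable
    apply (integrable_mul_gDen hC1.continuous.aestronglyMeasurable habs).congr
    filter_upwards with v
    simp [mul_comm]
  have Igrad : Integrable (gradient h) γ := by
    apply key_integrable
    apply Integrable.mono' (integrable_gDen.const_mul C')
    · exact (gDen_cont.smul (continuous_gradient hC1)).aestronglyMeasurable
    · filter_upwards with v
      rw [norm_smul, Real.norm_eq_abs, abs_of_nonneg (gDen_pos v).le, mul_comm]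
      exact mul_le_mul_of_nonneg_right (hC' v) (gDen_pos v).le
  have Ihv : Integrable (fun v => h v • v) γ := by
    apply key_integrable
    apply Integrable.mono' (integrable_norm_gDen.const_mul C)
    · exact (gDen_cont.smul (hC1.continuous.smul continuous_id)).aestronglyMeasurable
    · filter_upwards with v
      rw [norm_smul, norm_smul, Real.norm_eq_abs, Real.norm_eq_abs,
        abs_of_nonneg (gDen_pos v).le]
      calc gDen d v * (|h v| * ‖v‖) ≤ gDen d v * (C * ‖v‖) := by
            apply mul_le_mul_of_nonneg_left _ (gDen_pos v).le
            exact mul_le_mul_of_nonneg_right (habs v) (norm_nonneg v)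
        _ = C * (‖v‖ * gDen d v) := by ring
  -- the mean equals the integral of the gradient
  have main_eq : ∫ v, h v • v ∂γ = ∫ v, gradient h v ∂γ := by
    ext i
    have e1 : (∫ v, h v • v ∂γ) i = ∫ v, h v * v i ∂γ := by
      have := (EuclideanSpace.proj i (𝕜 := ℝ)).integral_comp_comm Ihv
      simp only [PiLp.proj_apply] at this
      rw [← this]
      exact integral_congr_ae (Filter.Eventually.of_forall fun v => by simp)
    have e2 : (∫ v, gradient h v ∂γ) i
        = ∫ v, fderiv ℝ h v (EuclideanSpace.single i 1) ∂γ := by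
      have := (EuclideanSpace.proj i (𝕜 := ℝ)).integral_comp_comm Igrad
      simp only [PiLp.proj_apply] at this
      rw [← this]
      apply integral_congr_ae (Filter.Eventually.of_forall fun v => ?_)
      rw [fderiv_eq_inner_gradient, EuclideanSpace.inner_single_right]
      simp
    rw [e1, e2]
    have t1 : ∫ v, h v * v i ∂γ = ∫ v, h v * v i * gDen d v := by
      rw [key_int]
      apply integral_congr_ae (Filter.Eventually.of_forall fun v => ?_)
      simp only [smul_eq_mul]; ring
    have t2 : ∫ v, fderiv ℝ h v (EuclideanSpace.single i 1) ∂γ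
        = ∫ v, fderiv ℝ h v (EuclideanSpace.single i 1) * gDen d v := by
      rw [key_int]
      apply integral_congr_ae (Filter.Eventually.of_forall fun v => ?_)
      simp only [smul_eq_mul]; ring
    rw [t1, t2]
    exact gaussian_ibp hC1 ⟨C, hC⟩ hpos ⟨C', hC'⟩ i
  have hnorm : ‖∫ v, h v • v ∂γ‖ ≤ ∫ v, ‖gradient h v‖ ∂γ := by
    rw [main_eq]
    exact norm_integral_le_integral_norm _
  -- Cauchy-Schwarz
  set I := ∫⁻ v, ENNReal.ofReal (‖gradient h v‖ ^ 2 / h v) ∂γ with hI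
  set N := ∫⁻ v, ENNReal.ofReal ‖gradient h v‖ ∂γ with hN
  have hJN : ENNReal.ofReal (∫ v, ‖gradient h v‖ ∂γ) = N :=
    ofReal_integral_eq_lintegral_ofReal Igrad.norm
      (Filter.Eventually.of_forall fun v => norm_nonneg _)
  have hCS : N ≤ I ^ ((1:ℝ)/2) := by
    set f : EuclideanSpace ℝ (Fin d) → ℝ≥0∞ :=
      fun v => ENNReal.ofReal (‖gradient h v‖ / Real.sqrt (h v)) with hf
    set g : EuclideanSpace ℝ (Fin d) → ℝ≥0∞ :=
      fun v => ENNReal.ofReal (Real.sqrt (h v)) with hg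
    have hsqrt_pos : ∀ v, 0 < Real.sqrt (h v) := fun v => Real.sqrt_pos.2 (hpos v)
    have hfm : AEMeasurable f γ := by
      apply Measurable.aemeasurable
      apply ENNReal.measurable_ofReal.comp
      exact ((continuous_gradient hC1).norm.div
        (hC1.continuous.sqrt) (fun v => (hsqrt_pos v).ne')).measurable
    have hgm : AEMeasurable g γ := by
      apply Measurable.aemeasurable
      exact ENNReal.measurable_ofReal.comp (hC1.continuous.sqrt).measurable
    have hcs := ENNReal.lintegral_mul_le_Lp_mul_Lq γ
      Real.HolderConjugate.two_two hfm hgm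
    have e_fg : ∫⁻ v, (f * g) v ∂γ = N := by
      apply lintegral_congr (fun v => ?_)
      simp only [Pi.mul_apply, hf, hg]
      rw [← ENNReal.ofReal_mul (div_nonneg (norm_nonneg _) (hsqrt_pos v).le),
        div_mul_cancel₀ _ (hsqrt_pos v).ne']
    have e_f : ∫⁻ v, f v ^ (2:ℝ) ∂γ = I := by
      apply lintegral_congr (fun v => ?_)
      rw [hf, ENNReal.ofReal_rpow_of_nonneg (div_nonneg (norm_nonneg _) (hsqrt_pos v).le)
        (by norm_num)]
      congr 1
      rw [show (2:ℝ) = ((2:ℕ):ℝ) by norm_num, Real.rpow_natCast, div_pow,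
        Real.sq_sqrt (hpos v).le]
    have e_g : ∫⁻ v, g v ^ (2:ℝ) ∂γ = 1 := by
      have : ∫⁻ v, g v ^ (2:ℝ) ∂γ = ∫⁻ v, ENNReal.ofReal (h v) ∂γ := by
        apply lintegral_congr (fun v => ?_)
        rw [hg, ENNReal.ofReal_rpow_of_nonneg (hsqrt_pos v).le (by norm_num)]
        congr 1
        rw [show (2:ℝ) = ((2:ℕ):ℝ) by norm_num, Real.rpow_natCast,
          Real.sq_sqrt (hpos v).le]
      rw [this, ← ofReal_integral_eq_lintegral_ofReal Ih
        (Filter.Eventually.of_forall fun v => (hpos v).le), hmass, ENNReal.ofReal_one]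
    rw [e_fg, e_f, e_g] at hcs
    simpa using hcs
  -- conclude
  calc ENNReal.ofReal (‖∫ v, h v • v ∂γ‖ ^ 2)
      = ENNReal.ofReal (‖∫ v, h v • v ∂γ‖) ^ 2 := ENNReal.ofReal_pow (norm_nonneg _) 2
    _ ≤ N ^ 2 := by
        apply pow_le_pow_left' _ 2
        rw [← hJN]
        exact ENNReal.ofReal_le_ofReal hnorm
    _ ≤ (I ^ ((1:ℝ)/2)) ^ 2 := pow_le_pow_left' hCS 2
    _ = I := by
        rw [← ENNReal.rpow_natCast (I ^ ((1:ℝ)/2)) 2, ← ENNReal.rpow_mul]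
        norm_num
end

section
/- Let 0 < β < 1/2 and let K be a symmetric real d×d matrix such that I_d − K is positive definite. Then I_d − 2βK is positive definite and det(I_d − 2βK) ≥ det(I_d − K)^{2β}; equivalently, with Λ_β(K) := −β tr K − (1/2) log det(I_d − 2βK), one has (1/β) Λ_β(K) ≤ tr(I_d − K) − d − log det(I_d − K). -/
open Matrix

private lemma posDef_smul_aux {n : Type*} [Fintype n] {A : Matrix n n ℝ} (hA : A.PosDef)
    {c : ℝ} (hc : 0 < c) : (c • A).PosDef := by
  refine ⟨?_, fun x hx => ?_⟩
  · unfold Matrix.IsHermitian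
    rw [conjTranspose_smul, hA.1]
    simp
  · simpa [Finsupp.mul_sum, mul_assoc, mul_left_comm] using smul_pos hc (hA.2 hx)

private lemma det_convex_comb {n : Type*} [Fintype n] [DecidableEq n]
    {A : Matrix n n ℝ} (hA : A.IsHermitian) (t : ℝ) :
    ((1 - t) • (1 : Matrix n n ℝ) + t • A).det
      = ∏ i, ((1 - t) + t * hA.eigenvalues i) := by
  have hU := (Matrix.mem_unitaryGroup_iff).mp (hA.eigenvectorUnitary).2
  have key : (1 - t) • (1 : Matrix n n ℝ) + t • A
      = (hA.eigenvectorUnitary : Matrix n n ℝ)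
        * diagonal (fun i => (1 - t) + t * hA.eigenvalues i)
        * (star (hA.eigenvectorUnitary : Matrix n n ℝ)) := by
    have hsp := hA.spectral_theorem
    rw [Unitary.conjStarAlgAut_apply] at hsp
    have hdiag : diagonal (fun i => (1 - t) + t * hA.eigenvalues i)
        = (1 - t) • (1 : Matrix n n ℝ) + t • diagonal (RCLike.ofReal ∘ hA.eigenvalues) := by
      ext i j
      by_cases h : i = j <;> simp [h, Matrix.one_apply, Matrix.diagonal_apply]
    rw [hdiag, Matrix.mul_add, Matrix.add_mul, Matrix.mul_smul, Matrix.mul_smul,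
      Matrix.smul_mul, Matrix.smul_mul, Matrix.mul_one, hU, ← hsp]
  have hdet1 : (hA.eigenvectorUnitary : Matrix n n ℝ).det
      * (star (hA.eigenvectorUnitary : Matrix n n ℝ)).det = 1 := by
    rw [← Matrix.det_mul, hU, Matrix.det_one]
  rw [key, Matrix.det_mul, Matrix.det_mul, Matrix.det_diagonal]
  linear_combination (∏ i, ((1 - t) + t * hA.eigenvalues i)) * hdet1

/-- For `0 < β < 1/2` and a symmetric matrix `K` with `I_d − K` positive definite,
the matrix `I_d − 2βK` is positive definite, `det(I_d − 2βK) ≥ det(I_d − K)^{2β}`, and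
with `Λ_β(K) = −β tr K − (1/2) log det(I_d − 2βK)` one has
`(1/β) Λ_β(K) ≤ tr(I_d − K) − d − log det(I_d − K)`. -/
theorem lambda_beta_bound (d : ℕ) (β : ℝ) (hβ : 0 < β) (hβ' : β < 1 / 2)
    (K : Matrix (Fin d) (Fin d) ℝ) (hKsymm : K.IsSymm)
    (hpd : ((1 : Matrix (Fin d) (Fin d) ℝ) - K).PosDef) :
    ((1 : Matrix (Fin d) (Fin d) ℝ) - (2 * β) • K).PosDef ∧
      ((1 : Matrix (Fin d) (Fin d) ℝ) - K).det ^ (2 * β)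
        ≤ ((1 : Matrix (Fin d) (Fin d) ℝ) - (2 * β) • K).det ∧
      (1 / β) * (-β * K.trace
          - (1 / 2) * Real.log (((1 : Matrix (Fin d) (Fin d) ℝ) - (2 * β) • K).det))
        ≤ ((1 : Matrix (Fin d) (Fin d) ℝ) - K).trace - d
          - Real.log (((1 : Matrix (Fin d) (Fin d) ℝ) - K).det) := by
  set A : Matrix (Fin d) (Fin d) ℝ := (1 : Matrix (Fin d) (Fin d) ℝ) - K with hA_def
  have hA : A.IsHermitian := hpd.1
  have hcomb : (1 : Matrix (Fin d) (Fin d) ℝ) - (2 * β) • K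
      = (1 - 2 * β) • (1 : Matrix (Fin d) (Fin d) ℝ) + (2 * β) • A := by
    rw [hA_def]; module
  have h2β : 0 < 2 * β := by linarith
  have h2β' : 1 - 2 * β > 0 := by linarith
  have hμ : ∀ i, 0 < hA.eigenvalues i := hpd.eigenvalues_pos
  -- Part 1
  have part1 : ((1 : Matrix (Fin d) (Fin d) ℝ) - (2 * β) • K).PosDef := by
    rw [hcomb]
    exact (posDef_smul_aux Matrix.PosDef.one h2β').add (posDef_smul_aux hpd h2β)
  -- Part 2
  have hdetA : A.det = ∏ i, hA.eigenvalues i := by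
    simpa using hA.det_eq_prod_eigenvalues
  have hdetB : ((1 : Matrix (Fin d) (Fin d) ℝ) - (2 * β) • K).det
      = ∏ i, ((1 - 2 * β) + 2 * β * hA.eigenvalues i) := by
    rw [hcomb, det_convex_comb hA (2 * β)]
  have part2 : A.det ^ (2 * β) ≤ ((1 : Matrix (Fin d) (Fin d) ℝ) - (2 * β) • K).det := by
    rw [hdetA, hdetB, ← Real.finset_prod_rpow _ _ (fun i _ => (hμ i).le)]
    refine Finset.prod_le_prod (fun i _ => Real.rpow_nonneg (hμ i).le _) (fun i _ => ?_)
    have := Real.geom_mean_le_arith_mean2_weighted (w₁ := 1 - 2 * β) (w₂ := 2 * β)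
      (p₁ := 1) (p₂ := hA.eigenvalues i) (by linarith) h2β.le zero_le_one (hμ i).le
      (by ring)
    simpa [Real.one_rpow] using this
  -- Part 3
  have hdetApos : 0 < A.det := hpd.det_pos
  have hdetBpos : 0 < ((1 : Matrix (Fin d) (Fin d) ℝ) - (2 * β) • K).det := part1.det_pos
  have hlog : 2 * β * Real.log A.det
      ≤ Real.log (((1 : Matrix (Fin d) (Fin d) ℝ) - (2 * β) • K).det) := by
    calc 2 * β * Real.log A.det = Real.log (A.det ^ (2 * β)) :=
          (Real.log_rpow hdetApos _).symm
      _ ≤ _ := Real.log_le_log (Real.rpow_pos_of_pos hdetApos _) part2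
  have htr : A.trace = (d : ℝ) - K.trace := by
    rw [hA_def, Matrix.trace_sub, Matrix.trace_one]
    simp
  refine ⟨part1, part2, ?_⟩
  rw [htr]
  have hβne : β ≠ 0 := hβ.ne'
  have expand : (1 / β) * (-β * K.trace
      - (1 / 2) * Real.log (((1 : Matrix (Fin d) (Fin d) ℝ) - (2 * β) • K).det))
      = -K.trace - (1 / (2 * β)) * Real.log (((1 : Matrix (Fin d) (Fin d) ℝ)
        - (2 * β) • K).det) := by
    field_simp
  rw [expand]
  have : (1 / (2 * β)) * (2 * β * Real.log A.det)
      ≤ (1 / (2 * β)) * Real.log (((1 : Matrix (Fin d) (Fin d) ℝ) - (2 * β) • K).det) :=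
    mul_le_mul_of_nonneg_left hlog (by positivity)
  rw [show (1 / (2 * β)) * (2 * β * Real.log A.det) = Real.log A.det by field_simp] at this
  linarith
end

section
/- Let p : ℝ^n → [0,∞) be a bounded measurable function with compact support and ∫ p(x) dx = 1, and let η : ℝ^n → [0,∞) be continuous with compact support and ∫ η(x) dx = 1. Let q = η * p be the convolution. Then ∫ q(x) log q(x) dx ≤ ∫ p(x) log p(x) dx, with the convention 0·log 0 = 0. -/
open MeasureTheory

/-- Tangent line inequality for `t ↦ t * log t` at a point `c > 0`. -/
lemma mul_log_tangent_le {c t : ℝ} (hc : 0 < c) (ht : 0 ≤ t) :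
    c * Real.log c + (Real.log c + 1) * (t - c) ≤ t * Real.log t := by
  rcases eq_or_lt_of_le ht with h | h
  · simp [← h]; nlinarith
  · have hdiv : Real.log (c / t) ≤ c / t - 1 := Real.log_le_sub_one_of_pos (by positivity)
    have hlog : Real.log (c / t) = Real.log c - Real.log t := Real.log_div hc.ne' h.ne'
    rw [hlog] at hdiv
    have := mul_le_mul_of_nonneg_left hdiv ht
    have hct : t * (c / t) = c := by field_simp
    nlinarith

/-- A bounded a.e.-strongly-measurable function with compact support is integrable. -/
lemma integrable_of_bdd_compactSupport {E : Type*} [MeasurableSpace E]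
    [TopologicalSpace E] [T2Space E] [OpensMeasurableSpace E]
    {μ : Measure E} [IsFiniteMeasureOnCompacts μ]
    {f : E → ℝ} (hm : AEStronglyMeasurable f μ) {C : ℝ} (hb : ∀ x, |f x| ≤ C)
    (hs : HasCompactSupport f) : Integrable f μ := by
  refine Integrable.mono' (g := (tsupport f).indicator fun _ => C) ?_ hm ?_
  · rw [integrable_indicator_iff (isClosed_tsupport f).measurableSet]
    exact integrableOn_const hs.isCompact.measure_lt_top.ne
  · refine Filter.Eventually.of_forall fun x => ?_
    by_cases hx : x ∈ tsupport f
    · simpa [Set.indicator_of_mem hx] using hb x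
    · simp [Set.indicator_of_notMem hx, image_eq_zero_of_notMem_tsupport hx]

/-- Entropy decreases under convolution with a probability kernel: if `p` is a bounded,
compactly supported probability density on `ℝ^n` and `η` a continuous, compactly
supported probability density, then the convolution `q = η * p` satisfies
`∫ q log q ≤ ∫ p log p`. -/
theorem entropy_convolution_le (n : ℕ) (p η : EuclideanSpace ℝ (Fin n) → ℝ)
    (hpmeas : Measurable p) (hpnonneg : ∀ x, 0 ≤ p x)
    (hpbd : ∃ C, ∀ x, p x ≤ C) (hpsupp : HasCompactSupport p)
    (hpmass : ∫ x, p x = 1)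
    (hηcont : Continuous η) (hηnonneg : ∀ x, 0 ≤ η x)
    (hηsupp : HasCompactSupport η) (hηmass : ∫ x, η x = 1)
    (q : EuclideanSpace ℝ (Fin n) → ℝ)
    (hq : q = fun x => ∫ y, η (x - y) * p y) :
    ∫ x, q x * Real.log (q x) ≤ ∫ x, p x * Real.log (p x) := by
  classical
  obtain ⟨Cp, hCp⟩ := hpbd
  -- basic boundedness facts
  have hpabs : ∀ x, |p x| ≤ Cp := fun x => by
    rw [abs_of_nonneg (hpnonneg x)]; exact hCp x
  -- `φ = fun t => t * log t`
  set φ : ℝ → ℝ := fun t => t * Real.log t with hφ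
  have hφcont : Continuous φ := Real.continuous_mul_log
  have hφ0 : φ 0 = 0 := by simp [hφ]
  -- p is integrable
  have hp_int : Integrable p := integrable_of_bdd_compactSupport
    hpmeas.aestronglyMeasurable hpabs hpsupp
  have hη_int : Integrable η := hηcont.integrable_of_hasCompactSupport hηsupp
  -- φ ∘ p
  set f1 : EuclideanSpace ℝ (Fin n) → ℝ := fun y => φ (p y) with hf1
  have hf1meas : Measurable f1 := hφcont.measurable.comp hpmeas
  have hf1supp : HasCompactSupport f1 := hpsupp.comp_left (g := φ) hφ0
  obtain ⟨M, hM⟩ : ∃ M, ∀ t ∈ Set.Icc (0:ℝ) Cp, |φ t| ≤ M := by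
    obtain ⟨M, hM⟩ := (isCompact_Icc (a := (0:ℝ)) (b := Cp)).exists_bound_of_continuousOn
      hφcont.continuousOn
    exact ⟨M, fun t ht => by simpa using hM t ht⟩
  have hf1abs : ∀ y, |f1 y| ≤ M := fun y => hM _ ⟨hpnonneg y, hCp y⟩
  have hf1_int : Integrable f1 := integrable_of_bdd_compactSupport
    hf1meas.aestronglyMeasurable hf1abs hf1supp
  -- express q as a convolution
  set L : ℝ →L[ℝ] ℝ →L[ℝ] ℝ := ContinuousLinearMap.mul ℝ ℝ with hL
  have hq' : q = convolution p η L volume := by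
    rw [hq]; funext x
    simp only [convolution, ContinuousLinearMap.mul_apply']
    exact congrArg _ (funext fun y => mul_comm _ _)
  have hq_cont : Continuous q := by
    rw [hq']; exact hηsupp.continuous_convolution_right L hp_int.locallyIntegrable hηcont
  have hq_supp : HasCompactSupport q := by
    rw [hq']; exact hpsupp.convolution L hηsupp
  -- the majorant r = (φ ∘ p) ⋆ η
  set r : EuclideanSpace ℝ (Fin n) → ℝ := convolution f1 η L volume with hr
  have hr_cont : Continuous r :=
    hηsupp.continuous_convolution_right L hf1_int.locallyIntegrable hηcont
  have hr_supp : HasCompactSupport r := hf1supp.convolution L hηsupp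
  have hr_int : Integrable r := hr_cont.integrable_of_hasCompactSupport hr_supp
  have hr_eval : ∀ x, r x = ∫ y, η (x - y) * f1 y := by
    intro x
    simp only [hr, convolution, ContinuousLinearMap.mul_apply', hL]
    exact congrArg _ (funext fun y => mul_comm _ _)
  -- integral of r
  have hr_integral : ∫ x, r x = ∫ y, f1 y := by
    rw [hr, integral_convolution L hf1_int hη_int, hηmass]
    simp [hL, ContinuousLinearMap.mul_apply']
  -- pointwise Jensen inequality: φ (q x) ≤ r x
  have key : ∀ x, φ (q x) ≤ r x := by
    intro x
    -- integrability of the various integrands in y, for fixed x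
    have hηx_int : Integrable (fun y => η (x - y)) := hη_int.comp_sub_left x
    have hηx_mass : ∫ y, η (x - y) = 1 := by
      rw [integral_sub_left_eq_self η volume x, hηmass]
    have hηx_meas : AEStronglyMeasurable (fun y => η (x - y)) volume :=
      hηx_int.aestronglyMeasurable
    have hI2 : Integrable (fun y => η (x - y) * p y) := by
      have := hηx_int.bdd_mul (c := Cp) hpmeas.aestronglyMeasurable (Filter.Eventually.of_forall fun y => by
        simpa [Real.norm_eq_abs] using hpabs y)
      simpa [mul_comm] using this
    have hI3 : Integrable (fun y => η (x - y) * f1 y) := by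
      have := hηx_int.bdd_mul (c := M) hf1meas.aestronglyMeasurable (Filter.Eventually.of_forall fun y => by
        simpa [Real.norm_eq_abs] using hf1abs y)
      simpa [mul_comm] using this
    have hqx : q x = ∫ y, η (x - y) * p y := by rw [hq]
    have hqx_nonneg : 0 ≤ q x := by
      rw [hqx]
      exact integral_nonneg fun y => mul_nonneg (hηnonneg _) (hpnonneg _)
    rw [hr_eval x]
    rcases eq_or_lt_of_le hqx_nonneg with hc0 | hcpos
    · -- q x = 0 : the integrand vanishes a.e.
      have hzero : (fun y => η (x - y) * p y) =ᵐ[volume] 0 := by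
        rw [← integral_eq_zero_iff_of_nonneg
          (fun y => mul_nonneg (hηnonneg _) (hpnonneg _)) hI2]
        rw [← hqx, ← hc0]
      have hzero' : (fun y => η (x - y) * f1 y) =ᵐ[volume] 0 := by
        filter_upwards [hzero] with y hy
        rcases mul_eq_zero.mp hy with h | h
        · simp [h]
        · simp [hf1, h, hφ0]
      rw [integral_congr_ae hzero']
      simp [← hc0, hφ0]
    · -- q x > 0 : tangent line argument
      set c := q x with hc
      have htangent : ∀ y,
          η (x - y) * (φ c + (Real.log c + 1) * (p y - c)) ≤ η (x - y) * f1 y := by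
        intro y
        refine mul_le_mul_of_nonneg_left ?_ (hηnonneg _)
        simpa [hφ, hf1] using mul_log_tangent_le hcpos (hpnonneg y)
      -- rewrite the lower integrand as a linear combination
      have hcomb : ∀ y, η (x - y) * (φ c + (Real.log c + 1) * (p y - c)) =
          (φ c - (Real.log c + 1) * c) * η (x - y)
            + (Real.log c + 1) * (η (x - y) * p y) := by
        intro y; ring
      have hI4 : Integrable (fun y =>
          η (x - y) * (φ c + (Real.log c + 1) * (p y - c))) := by
        simp only [hcomb]
        exact (hηx_int.const_mul _).add (hI2.const_mul _)
      have hmono := integral_mono hI4 hI3 htangent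
      have hval : ∫ y, η (x - y) * (φ c + (Real.log c + 1) * (p y - c)) = φ c := by
        simp only [hcomb]
        rw [integral_add ((hηx_int.const_mul _)) (hI2.const_mul _),
          integral_const_mul, integral_const_mul, hηx_mass, ← hqx]
        ring
      rw [hval] at hmono
      exact hmono
  -- φ ∘ q is integrable
  have hφq_int : Integrable (fun x => φ (q x)) :=
    (hφcont.comp hq_cont).integrable_of_hasCompactSupport (hq_supp.comp_left hφ0)
  calc ∫ x, q x * Real.log (q x) = ∫ x, φ (q x) := rfl
    _ ≤ ∫ x, r x := integral_mono hφq_int hr_int key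
    _ = ∫ y, f1 y := hr_integral
    _ = ∫ x, p x * Real.log (p x) := rfl
end

section
/- Let μ be a probability measure on a measurable space, and let f_n, f be measurable functions with f_n ≥ 0, f ≥ 0, and f_n → f in L¹(μ). Then ∫ f log f dμ ≤ liminf_{n→∞} ∫ f_n log f_n dμ, where each integral is well-defined with values in (−∞, +∞] since z log z ≥ −1/e and μ is finite, and the convention 0·log 0 = 0 is used. -/
open MeasureTheory Filter

/-- Lower semicontinuity of the entropy functional under `L¹(μ)` convergence, for a
probability measure `μ`: if `fₙ ≥ 0`, `f ≥ 0` and `fₙ → f` in `L¹(μ)`, then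
`∫ f log f dμ ≤ liminf ∫ fₙ log fₙ dμ`.  The (possibly infinite) entropies are encoded
as `∫⁻ (f log f + e⁻¹) dμ ∈ [0,∞]`, using that `z log z ≥ −e⁻¹` for `z ≥ 0` and that `μ`
has total mass `1`. -/
theorem entropy_lsc_L1 {α : Type*} [MeasurableSpace α] (μ : Measure α)
    [IsProbabilityMeasure μ] (f : ℕ → α → ℝ) (g : α → ℝ)
    (hfmeas : ∀ n, Measurable (f n)) (hgmeas : Measurable g)
    (hfnonneg : ∀ n x, 0 ≤ f n x) (hgnonneg : ∀ x, 0 ≤ g x)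
    (hfint : ∀ n, Integrable (f n) μ) (hgint : Integrable g μ)
    (hL1 : Tendsto (fun n => ∫ x, |f n x - g x| ∂μ) atTop (nhds 0)) :
    ∫⁻ x, ENNReal.ofReal (g x * Real.log (g x) + Real.exp (-1)) ∂μ
      ≤ liminf (fun n =>
          ∫⁻ x, ENNReal.ofReal (f n x * Real.log (f n x) + Real.exp (-1)) ∂μ) atTop := by
  by_contra hcon
  push_neg at hcon
  obtain ⟨b, hb1, hb2⟩ := exists_between hcon
  have hfreq : ∃ᶠ n in atTop,
      (∫⁻ x, ENNReal.ofReal (f n x * Real.log (f n x) + Real.exp (-1)) ∂μ) < b :=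
    frequently_lt_of_liminf_lt (by isBoundedDefault) hb1
  obtain ⟨φ, hφmono, hφ⟩ := Filter.extraction_of_frequently_atTop hfreq
  -- express the L¹ distance as an eLpNorm
  have key : ∀ n, eLpNorm (f n - g) 1 μ = ENNReal.ofReal (∫ x, |f n x - g x| ∂μ) := by
    intro n
    rw [eLpNorm_one_eq_lintegral_enorm]
    simp only [Pi.sub_apply, Real.enorm_eq_ofReal_abs]
    have hint : Integrable (fun x => |f n x - g x|) μ := ((hfint n).sub hgint).abs
    rw [← ofReal_integral_eq_lintegral_ofReal hint
        (Filter.Eventually.of_forall fun x => abs_nonneg _)]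
  have hL1' : Tendsto (fun n => eLpNorm (f (φ n) - g) 1 μ) atTop (nhds 0) := by
    have : Tendsto (fun n => ENNReal.ofReal (∫ x, |f (φ n) x - g x| ∂μ)) atTop
        (nhds (ENNReal.ofReal 0)) :=
      (ENNReal.continuous_ofReal.tendsto 0).comp (hL1.comp hφmono.tendsto_atTop)
    simpa [key] using this
  have hTIM : TendstoInMeasure μ (fun n => f (φ n)) atTop g :=
    tendstoInMeasure_of_tendsto_eLpNorm one_ne_zero
      (fun n => (hfmeas (φ n)).aestronglyMeasurable) hgmeas.aestronglyMeasurable hL1'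
  obtain ⟨ψ, hψmono, hae⟩ := hTIM.exists_seq_tendsto_ae
  -- Fatou
  have hmeas : ∀ n, Measurable fun x =>
      ENNReal.ofReal (f (φ (ψ n)) x * Real.log (f (φ (ψ n)) x) + Real.exp (-1)) := by
    intro n
    exact (((hfmeas (φ (ψ n))).mul ((Real.measurable_log).comp (hfmeas (φ (ψ n))))).add
      measurable_const).ennreal_ofReal
  have fatou : ∫⁻ x, ENNReal.ofReal (g x * Real.log (g x) + Real.exp (-1)) ∂μ
      ≤ liminf (fun n =>
          ∫⁻ x, ENNReal.ofReal (f (φ (ψ n)) x * Real.log (f (φ (ψ n)) x) + Real.exp (-1)) ∂μ)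
        atTop := by
    have heq : ∀ᵐ x ∂μ, ENNReal.ofReal (g x * Real.log (g x) + Real.exp (-1))
        = liminf (fun n =>
            ENNReal.ofReal (f (φ (ψ n)) x * Real.log (f (φ (ψ n)) x) + Real.exp (-1))) atTop := by
      filter_upwards [hae] with x hx
      have : Tendsto (fun n =>
          ENNReal.ofReal (f (φ (ψ n)) x * Real.log (f (φ (ψ n)) x) + Real.exp (-1))) atTop
          (nhds (ENNReal.ofReal (g x * Real.log (g x) + Real.exp (-1)))) := by
        apply (ENNReal.continuous_ofReal.tendsto _).comp
        exact ((Real.continuous_mul_log.tendsto (g x)).comp hx).add tendsto_const_nhds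
      exact this.liminf_eq.symm
    calc ∫⁻ x, ENNReal.ofReal (g x * Real.log (g x) + Real.exp (-1)) ∂μ
        = ∫⁻ x, liminf (fun n =>
            ENNReal.ofReal (f (φ (ψ n)) x * Real.log (f (φ (ψ n)) x) + Real.exp (-1))) atTop ∂μ :=
          lintegral_congr_ae heq
      _ ≤ _ := lintegral_liminf_le hmeas
  have hle : liminf (fun n =>
      ∫⁻ x, ENNReal.ofReal (f (φ (ψ n)) x * Real.log (f (φ (ψ n)) x) + Real.exp (-1)) ∂μ)
      atTop ≤ b := by
    exact liminf_le_of_frequently_le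
      (Filter.Frequently.of_forall fun n => (hφ (ψ n)).le) (by isBoundedDefault)
  exact absurd (fatou.trans hle) (not_le.mpr hb2)
end
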